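/- arXiv:1712.04552 — 11 statements merged into one kernel-verified Lean document; each statement's English description precedes it below -/
import Mathlib

section
/- For every integer t ≥ 1 there is a constant C = C(t) > 0 such that for every integer p ≥ 2, every finite indexed family F of nonempty compact convex sets in the plane ℝ² satisfying (i) every pairwise-intersecting subfamily of F can be pierced by at most t points and (ii) the (p,2)-property, can be pierced by at most C·p⁸·(log₂ p)² points. -/
/-- The `(p,q)`-property for a finite indexed family of sets. -/
def HasPQ {ι α : Type*} [Fintype ι] (F : ι → Set α) (p q : ℕ) : Prop :=
  p ≤ Fintype.card ι ∧
    ∀ J : Finset ι, J.card = p → ∃ K ⊆ J, K.card = q ∧ (⋂ k ∈ K, F k).Nonempty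

/-- `P` pierces the family `F`: every member of `F` contains a point of `P`. -/
def Pierces {ι α : Type*} (F : ι → Set α) (P : Finset α) : Prop :=
  ∀ i, ∃ x ∈ P, x ∈ F i


namespace TTAux

/-! ### Geometry: LMPT-style partial orders on compact convex sets in the plane -/

noncomputable def xlo (C : Set (ℝ × ℝ)) : ℝ := sInf (Prod.fst '' C)
noncomputable def xhi (C : Set (ℝ × ℝ)) : ℝ := sSup (Prod.fst '' C)

/-- every point of `C` vertically aligned with a point of `D` lies strictly below it -/
def Below (C D : Set (ℝ × ℝ)) : Prop := ∀ p ∈ C, ∀ q ∈ D, p.1 = q.1 → p.2 < q.2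

lemma Below.disjoint {C D : Set (ℝ × ℝ)} (h : Below C D) : C ∩ D = ∅ := by
  ext z; simp only [Set.mem_inter_iff, Set.mem_empty_iff_false, iff_false]
  rintro ⟨hz1, hz2⟩; exact lt_irrefl z.2 (h z hz1 z hz2 rfl)

lemma xlo_le {C : Set (ℝ × ℝ)} (hC : IsCompact C) {p : ℝ × ℝ} (hp : p ∈ C) : xlo C ≤ p.1 :=
  csInf_le (hC.image continuous_fst).bddBelow ⟨p, hp, rfl⟩

lemma le_xhi {C : Set (ℝ × ℝ)} (hC : IsCompact C) {p : ℝ × ℝ} (hp : p ∈ C) : p.1 ≤ xhi C :=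
  le_csSup (hC.image continuous_fst).bddAbove ⟨p, hp, rfl⟩

lemma xlo_le_xhi {C : Set (ℝ × ℝ)} (hC : IsCompact C) (hne : C.Nonempty) : xlo C ≤ xhi C := by
  obtain ⟨p, hp⟩ := hne; exact (xlo_le hC hp).trans (le_xhi hC hp)

lemma exists_fiber {D : Set (ℝ × ℝ)} (hD : IsCompact D) (hc : Convex ℝ D) (hne : D.Nonempty)
    {x : ℝ} (h1 : xlo D ≤ x) (h2 : x ≤ xhi D) : ∃ r ∈ D, r.1 = x := by
  have himg : Convex ℝ (Prod.fst '' D) := by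
    have := hc.linear_image (LinearMap.fst ℝ ℝ ℝ); simpa using this
  have hcompact := hD.image (continuous_fst)
  have hnei : (Prod.fst '' D).Nonempty := hne.image _
  have hmem1 : xlo D ∈ Prod.fst '' D := hcompact.sInf_mem hnei
  have hmem2 : xhi D ∈ Prod.fst '' D := hcompact.sSup_mem hnei
  obtain ⟨r, hr, hrx⟩ := himg.ordConnected.out hmem1 hmem2 ⟨h1, h2⟩
  exact ⟨r, hr, hrx⟩

/-- The four LMPT-style relations. -/
def Rel : Fin 4 → Set (ℝ × ℝ) → Set (ℝ × ℝ) → Prop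
  | 0 => fun C D => xlo D ≤ xlo C ∧ xhi C ≤ xhi D ∧ Below C D
  | 1 => fun C D => xlo C ≤ xlo D ∧ xhi D ≤ xhi C ∧ Below C D
  | 2 => fun C D => xlo C < xlo D ∧ xhi C < xhi D ∧ Below C D
  | 3 => fun C D => xlo C < xlo D ∧ xhi C < xhi D ∧ Below D C

lemma Rel.below_or {k : Fin 4} {C D : Set (ℝ × ℝ)} (h : Rel k C D) :
    Below C D ∨ Below D C := by
  fin_cases k
  · exact Or.inl h.2.2
  · exact Or.inl h.2.2
  · exact Or.inl h.2.2
  · exact Or.inr h.2.2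

lemma Rel.disjoint {k : Fin 4} {C D : Set (ℝ × ℝ)} (h : Rel k C D) : C ∩ D = ∅ := by
  rcases h.below_or with h' | h'
  · exact h'.disjoint
  · rw [Set.inter_comm]; exact h'.disjoint

lemma Rel.irrefl {k : Fin 4} {C : Set (ℝ × ℝ)} (hne : C.Nonempty) : ¬ Rel k C C := by
  intro h
  obtain ⟨z, hz⟩ := hne
  have := h.disjoint
  rw [Set.inter_self] at this
  exact absurd (this ▸ hz) (Set.notMem_empty z)

lemma Rel.trans {k : Fin 4} {C D E : Set (ℝ × ℝ)}
    (hC : IsCompact C) (hE : IsCompact E)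
    (hD : IsCompact D) (hDc : Convex ℝ D) (hDne : D.Nonempty)
    (h1 : Rel k C D) (h2 : Rel k D E) : Rel k C E := by
  fin_cases k
  · obtain ⟨ha1, hb1, hB1⟩ := h1; obtain ⟨ha2, hb2, hB2⟩ := h2
    refine ⟨ha2.trans ha1, hb1.trans hb2, ?_⟩
    intro p hp q hq hx
    obtain ⟨r, hr, hrx⟩ := exists_fiber hD hDc hDne
      (le_trans ha1 (xlo_le hC hp)) (le_trans (le_xhi hC hp) hb1)
    exact lt_trans (hB1 p hp r hr hrx.symm) (hB2 r hr q hq (by rw [hrx, hx]))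
  · obtain ⟨ha1, hb1, hB1⟩ := h1; obtain ⟨ha2, hb2, hB2⟩ := h2
    refine ⟨ha1.trans ha2, hb2.trans hb1, ?_⟩
    intro p hp q hq hx
    obtain ⟨r, hr, hrx⟩ := exists_fiber hD hDc hDne
      (le_trans ha2 (xlo_le hE hq)) (le_trans (le_xhi hE hq) hb2)
    exact lt_trans (hB1 p hp r hr (by rw [hrx, hx])) (hB2 r hr q hq hrx)
  · obtain ⟨ha1, hb1, hB1⟩ := h1; obtain ⟨ha2, hb2, hB2⟩ := h2
    refine ⟨ha1.trans ha2, hb1.trans hb2, ?_⟩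
    intro p hp q hq hx
    obtain ⟨r, hr, hrx⟩ := exists_fiber hD hDc hDne
      (le_trans ha2.le (by rw [hx]; exact xlo_le hE hq)) (le_trans (le_xhi hC hp) hb1.le)
    exact lt_trans (hB1 p hp r hr hrx.symm) (hB2 r hr q hq (by rw [hrx, hx]))
  · obtain ⟨ha1, hb1, hB1⟩ := h1; obtain ⟨ha2, hb2, hB2⟩ := h2
    refine ⟨ha1.trans ha2, hb1.trans hb2, ?_⟩
    intro q hq p hp hx
    obtain ⟨r, hr, hrx⟩ := exists_fiber hD hDc hDne
      (le_trans ha2.le (xlo_le hE hq)) (by rw [hx]; exact (le_xhi hC hp).trans hb1.le)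
    exact lt_trans (hB2 q hq r hr hrx.symm) (hB1 r hr p hp (by rw [hrx, ← hx]))

lemma eval_lin (f : (ℝ × ℝ) →L[ℝ] ℝ) (z : ℝ × ℝ) :
    f z = z.1 * f (1, 0) + z.2 * f (0, 1) := by
  have hz : z = z.1 • ((1:ℝ), (0:ℝ)) + z.2 • ((0:ℝ), (1:ℝ)) := by
    simp [Prod.ext_iff]
  calc f z = f (z.1 • ((1:ℝ), (0:ℝ)) + z.2 • ((0:ℝ), (1:ℝ))) := by rw [← hz]
    _ = z.1 * f (1, 0) + z.2 * f (0, 1) := by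
        rw [map_add, map_smul, map_smul]; simp [smul_eq_mul]

lemma sep {C D : Set (ℝ × ℝ)}
    (hC : IsCompact C) (hCc : Convex ℝ C) (hCne : C.Nonempty)
    (hD : IsCompact D) (hDc : Convex ℝ D) (hDne : D.Nonempty)
    (hdisj : C ∩ D = ∅) :
    Below C D ∨ Below D C ∨ xhi C < xlo D ∨ xhi D < xlo C := by
  obtain ⟨f, u, v, hfu, huv, hfv⟩ :=
    geometric_hahn_banach_compact_closed hCc hC hDc hD.isClosed
      (Set.disjoint_iff_inter_eq_empty.mpr hdisj)
  set α := f (1, 0) with hα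
  set β := f (0, 1) with hβ
  rcases lt_trichotomy β 0 with hb | hb | hb
  · refine Or.inr (Or.inl ?_)
    intro q hq p hp hx
    have h1 : p.1 * α + p.2 * β < u := by rw [← eval_lin]; exact hfu p hp
    have h2 : v < q.1 * α + q.2 * β := by rw [← eval_lin]; exact hfv q hq
    by_contra hcon
    push_neg at hcon
    have h3 := mul_le_mul_of_nonpos_right hcon hb.le
    rw [hx] at h2
    linarith
  · rcases lt_trichotomy α 0 with ha | ha | ha
    · refine Or.inr (Or.inr (Or.inr ?_))
      have h1 : xhi D ≤ v / α := by
        apply csSup_le (hDne.image _)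
        rintro x ⟨q, hq, rfl⟩
        have := hfv q hq
        rw [eval_lin, ← hα, ← hβ, hb] at this
        rw [le_div_iff_of_neg ha]
        nlinarith
      have h2 : u / α ≤ xlo C := by
        apply le_csInf (hCne.image _)
        rintro x ⟨p, hp, rfl⟩
        have := hfu p hp
        rw [eval_lin, ← hα, ← hβ, hb] at this
        rw [div_le_iff_of_neg ha]
        nlinarith
      have h3 : (u - v) / α = u / α - v / α := sub_div u v α
      have h4 : 0 < (u - v) / α := div_pos_of_neg_of_neg (by linarith) ha
      linarith
    · exfalso
      obtain ⟨p, hp⟩ := hCne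
      obtain ⟨q, hq⟩ := hDne
      have h1 := hfu p hp
      have h2 := hfv q hq
      rw [eval_lin, ← hα, ← hβ, hb, ha] at h1 h2
      linarith
    · refine Or.inr (Or.inr (Or.inl ?_))
      have h1 : xhi C ≤ u / α := by
        apply csSup_le (hCne.image _)
        rintro x ⟨p, hp, rfl⟩
        have := hfu p hp
        rw [eval_lin, ← hα, ← hβ, hb] at this
        rw [le_div_iff₀ ha]
        nlinarith
      have h2 : v / α ≤ xlo D := by
        apply le_csInf (hDne.image _)
        rintro x ⟨q, hq, rfl⟩
        have := hfv q hq
        rw [eval_lin, ← hα, ← hβ, hb] at this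
        rw [div_le_iff₀ ha]
        nlinarith
      have h3 : (v - u) / α = v / α - u / α := sub_div v u α
      have h4 : 0 < (v - u) / α := div_pos (by linarith) ha
      linarith
  · refine Or.inl ?_
    intro p hp q hq hx
    have h1 : p.1 * α + p.2 * β < u := by rw [← eval_lin]; exact hfu p hp
    have h2 : v < q.1 * α + q.2 * β := by rw [← eval_lin]; exact hfv q hq
    by_contra hcon
    push_neg at hcon
    have h3 := mul_le_mul_of_nonneg_right hcon hb.le
    rw [hx] at h1
    linarith

lemma below_comparable {C D : Set (ℝ × ℝ)} (hB : Below C D) :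
    ∃ k, Rel k C D ∨ Rel k D C := by
  rcases le_or_gt (xlo D) (xlo C) with ha | ha
  · rcases le_or_gt (xhi C) (xhi D) with hbb | hbb
    · exact ⟨0, Or.inl ⟨ha, hbb, hB⟩⟩
    · rcases ha.lt_or_eq with halt | haeq
      · exact ⟨3, Or.inr ⟨halt, hbb, hB⟩⟩
      · exact ⟨1, Or.inl ⟨le_of_eq haeq.symm, hbb.le, hB⟩⟩
  · rcases lt_or_ge (xhi C) (xhi D) with hbb | hbb
    · exact ⟨2, Or.inl ⟨ha, hbb, hB⟩⟩
    · exact ⟨1, Or.inl ⟨ha.le, hbb, hB⟩⟩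

lemma left_rel {C D : Set (ℝ × ℝ)}
    (hC : IsCompact C) (hCne : C.Nonempty) (hD : IsCompact D) (hDne : D.Nonempty)
    (h : xhi C < xlo D) : Rel 2 C D := by
  refine ⟨lt_of_le_of_lt (xlo_le_xhi hC hCne) h, lt_of_lt_of_le h (xlo_le_xhi hD hDne), ?_⟩
  intro p hp q hq hx
  exact absurd hx (ne_of_lt (lt_of_le_of_lt (le_xhi hC hp) (h.trans_le (xlo_le hD hq))))

lemma comparable {C D : Set (ℝ × ℝ)}
    (hC : IsCompact C) (hCc : Convex ℝ C) (hCne : C.Nonempty)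
    (hD : IsCompact D) (hDc : Convex ℝ D) (hDne : D.Nonempty)
    (hdisj : C ∩ D = ∅) : ∃ k, Rel k C D ∨ Rel k D C := by
  rcases sep hC hCc hCne hD hDc hDne hdisj with h | h | h | h
  · exact below_comparable h
  · obtain ⟨k, hk⟩ := below_comparable h
    exact ⟨k, hk.symm⟩
  · exact ⟨2, Or.inl (left_rel hC hCne hD hDne h)⟩
  · exact ⟨2, Or.inr (left_rel hD hDne hC hCne h)⟩

/-! ### Combinatorics: Mirsky-type heights -/

open Classical in
/-- chains (with all other elements below `i`) containing `i` -/
noncomputable def chainSet {ι : Type*} [Fintype ι] (r : ι → ι → Prop) (i : ι) : Finset (Finset ι) :=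
  Finset.univ.powerset.filter
    (fun S => i ∈ S ∧ (∀ j ∈ S, j = i ∨ r j i) ∧ (S : Set ι).Pairwise fun a b => r a b ∨ r b a)

noncomputable def hgt {ι : Type*} [Fintype ι] (r : ι → ι → Prop) (i : ι) : ℕ :=
  (chainSet r i).sup Finset.card

lemma mem_chainSet {ι : Type*} [Fintype ι] {r : ι → ι → Prop} {i : ι} {S : Finset ι} :
    S ∈ chainSet r i ↔
      i ∈ S ∧ (∀ j ∈ S, j = i ∨ r j i) ∧ (S : Set ι).Pairwise fun a b => r a b ∨ r b a := by
  classical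
  simp [chainSet, Finset.mem_filter, Finset.mem_powerset]

lemma singleton_mem_chainSet {ι : Type*} [Fintype ι] (r : ι → ι → Prop) (i : ι) :
    {i} ∈ chainSet r i := by
  rw [mem_chainSet]
  refine ⟨Finset.mem_singleton_self i, ?_, ?_⟩
  · intro j hj; exact Or.inl (Finset.mem_singleton.mp hj)
  · simp

lemma one_le_hgt {ι : Type*} [Fintype ι] (r : ι → ι → Prop) (i : ι) : 1 ≤ hgt r i := by
  have h := Finset.le_sup (f := Finset.card) (singleton_mem_chainSet r i)
  rwa [Finset.card_singleton] at h

lemma hgt_le {ι : Type*} [Fintype ι] (r : ι → ι → Prop) (i : ι) (m : ℕ)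
    (hchain : ∀ S : Finset ι, ((S : Set ι).Pairwise fun a b => r a b ∨ r b a) → S.card ≤ m) :
    hgt r i ≤ m :=
  Finset.sup_le fun S hS => hchain S (mem_chainSet.mp hS).2.2

lemma hgt_lt {ι : Type*} [Fintype ι] {r : ι → ι → Prop}
    (htr : Transitive r) (hirr : ∀ a, ¬ r a a) {i j : ι} (hij : r i j) :
    hgt r i < hgt r j := by
  classical
  obtain ⟨S, hS, hsup⟩ :=
    Finset.exists_mem_eq_sup (chainSet r i) ⟨{i}, singleton_mem_chainSet r i⟩ Finset.card
  rw [mem_chainSet] at hS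
  obtain ⟨hiS, hlow, hpw⟩ := hS
  have hjS : j ∉ S := by
    intro hj
    rcases hlow j hj with h | h
    · exact hirr j (h ▸ hij)
    · exact hirr j (htr h hij)
  have hmem : insert j S ∈ chainSet r j := by
    rw [mem_chainSet]
    refine ⟨Finset.mem_insert_self j S, ?_, ?_⟩
    · intro k hk
      rcases Finset.mem_insert.mp hk with h | h
      · exact Or.inl h
      · rcases hlow k h with h' | h'
        · exact Or.inr (h' ▸ hij)
        · exact Or.inr (htr h' hij)
    · intro a ha b hb hab
      rcases Finset.mem_insert.mp ha with ha' | ha' <;>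
        rcases Finset.mem_insert.mp hb with hb' | hb'
      · exact absurd (ha'.trans hb'.symm) hab
      · subst ha'
        rcases hlow b hb' with h' | h'
        · exact Or.inr (h' ▸ hij)
        · exact Or.inr (htr h' hij)
      · subst hb'
        rcases hlow a ha' with h' | h'
        · exact Or.inl (h' ▸ hij)
        · exact Or.inl (htr h' hij)
      · exact hpw ha' hb' hab
  have h1 : S.card + 1 ≤ (chainSet r j).sup Finset.card := by
    have := Finset.le_sup (f := Finset.card) hmem
    rwa [Finset.card_insert_of_notMem hjS] at this
  show (chainSet r i).sup Finset.card < (chainSet r j).sup Finset.card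
  omega

end TTAux

/-- Theorem 1.8(2): for every `t ≥ 1` there is `C = C(t) > 0` such that every
finite family of nonempty compact convex sets in the plane in which every
pairwise-intersecting subfamily can be pierced by `t` points, and which
satisfies the `(p,2)`-property, can be pierced by `C·p⁸·(log₂ p)²` points. -/
theorem twotwo_to_p2_plane (t : ℕ) (ht : 1 ≤ t) :
    ∃ C : ℝ, 0 < C ∧
      ∀ p : ℕ, 2 ≤ p →
        ∀ (ι : Type) [Fintype ι], ∀ F : ι → Set (ℝ × ℝ),
          (∀ i, (F i).Nonempty) →
          (∀ i, IsCompact (F i)) →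
          (∀ i, Convex ℝ (F i)) →
          (∀ S : Finset ι, (∀ i ∈ S, ∀ j ∈ S, (F i ∩ F j).Nonempty) →
            ∃ P : Finset (ℝ × ℝ), P.card ≤ t ∧ ∀ i ∈ S, ∃ x ∈ P, x ∈ F i) →
          HasPQ F p 2 →
          ∃ P : Finset (ℝ × ℝ),
            (P.card : ℝ) ≤ C * (p : ℝ) ^ 8 * (Real.logb 2 (p : ℝ)) ^ 2 ∧
            Pierces F P := by
  refine ⟨t, by exact_mod_cast Nat.lt_of_lt_of_le Nat.zero_lt_one ht, ?_⟩
  intro p hp ι _ F hne hcomp hconv htt hpq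
  classical
  set r : Fin 4 → ι → ι → Prop := fun k i j => TTAux.Rel k (F i) (F j) with hr
  have htrans : ∀ k, Transitive (r k) := by
    intro k a b c h1 h2
    exact TTAux.Rel.trans (hcomp a) (hcomp c) (hcomp b) (hconv b) (hne b) h1 h2
  have hirr : ∀ k i, ¬ r k i i := fun k i => TTAux.Rel.irrefl (hne i)
  have hchain : ∀ (k : Fin 4) (S : Finset ι),
      ((S : Set ι).Pairwise fun a b => r k a b ∨ r k b a) → S.card ≤ p - 1 := by
    intro k S hS
    by_contra hcard
    push_neg at hcard
    have hple : p ≤ S.card := by omega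
    obtain ⟨J, hJS, hJcard⟩ := Finset.exists_subset_card_eq hple
    obtain ⟨K, hKJ, hKcard, hKne⟩ := hpq.2 J hJcard
    obtain ⟨a, b, hab, rfl⟩ := Finset.card_eq_two.mp hKcard
    obtain ⟨z, hz⟩ := hKne
    simp only [Set.mem_iInter] at hz
    have hza : z ∈ F a := hz a (by simp)
    have hzb : z ∈ F b := hz b (by simp)
    have haS : a ∈ S := hJS (hKJ (by simp))
    have hbS : b ∈ S := hJS (hKJ (by simp))
    rcases hS (Finset.mem_coe.mpr haS) (Finset.mem_coe.mpr hbS) hab with h | h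
    · have hd := TTAux.Rel.disjoint h
      rw [Set.eq_empty_iff_forall_notMem] at hd
      exact hd z ⟨hza, hzb⟩
    · have hd := TTAux.Rel.disjoint h
      rw [Set.eq_empty_iff_forall_notMem] at hd
      exact hd z ⟨hzb, hza⟩
  set c : ι → Fin 4 → ℕ := fun i k => TTAux.hgt (r k) i with hc
  have hcicc : ∀ i k, c i k ∈ Finset.Icc 1 (p - 1) := fun i k =>
    Finset.mem_Icc.mpr ⟨TTAux.one_le_hgt _ _, TTAux.hgt_le _ _ _ (hchain k)⟩
  set colors := Finset.univ.image c with hcolors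
  have hclass : ∀ v : Fin 4 → ℕ, ∀ i ∈ Finset.univ.filter (fun i => c i = v),
      ∀ j ∈ Finset.univ.filter (fun i => c i = v), (F i ∩ F j).Nonempty := by
    intro v i hi j hj
    simp only [Finset.mem_filter] at hi hj
    by_contra hdisj
    rw [Set.not_nonempty_iff_eq_empty] at hdisj
    obtain ⟨k, hk | hk⟩ :=
      TTAux.comparable (hcomp i) (hconv i) (hne i) (hcomp j) (hconv j) (hne j) hdisj
    · have hlt := TTAux.hgt_lt (htrans k) (fun a => hirr k a) hk
      have h1 : c i k = v k := congrFun hi.2 k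
      have h2 : c j k = v k := congrFun hj.2 k
      have : c i k < c j k := hlt
      omega
    · have hlt := TTAux.hgt_lt (htrans k) (fun a => hirr k a) hk
      have h1 : c i k = v k := congrFun hi.2 k
      have h2 : c j k = v k := congrFun hj.2 k
      have : c j k < c i k := hlt
      omega
  have hex : ∀ v : Fin 4 → ℕ, ∃ P : Finset (ℝ × ℝ), P.card ≤ t ∧
      ∀ i ∈ Finset.univ.filter (fun i => c i = v), ∃ x ∈ P, x ∈ F i :=
    fun v => htt _ (hclass v)
  choose g hg1 hg2 using hex
  refine ⟨colors.biUnion g, ?_, ?_⟩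
  · have h1 : (colors.biUnion g).card ≤ colors.card * t := by
      calc (colors.biUnion g).card ≤ ∑ v ∈ colors, (g v).card := Finset.card_biUnion_le
        _ ≤ ∑ _v ∈ colors, t := Finset.sum_le_sum (fun v _ => hg1 v)
        _ = colors.card * t := by rw [Finset.sum_const, smul_eq_mul]
    have h2 : colors.card ≤ (p - 1) ^ 4 := by
      have hsub : colors ⊆ Fintype.piFinset (fun _ : Fin 4 => Finset.Icc 1 (p - 1)) := by
        intro v hv
        obtain ⟨i, _, rfl⟩ := Finset.mem_image.mp hv
        rw [Fintype.mem_piFinset]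
        exact fun k => hcicc i k
      calc colors.card ≤ _ := Finset.card_le_card hsub
        _ = (p - 1) ^ 4 := by
            rw [Fintype.card_piFinset]
            simp [Nat.card_Icc]
    have hcard : (colors.biUnion g).card ≤ (p - 1) ^ 4 * t :=
      le_trans h1 (Nat.mul_le_mul_right t h2)
    have hpr : (2 : ℝ) ≤ (p : ℝ) := by exact_mod_cast hp
    have hlogb : (1 : ℝ) ≤ Real.logb 2 (p : ℝ) := by
      rw [show (1 : ℝ) = Real.logb 2 2 from (Real.logb_self_eq_one one_lt_two).symm]
      exact Real.logb_le_logb_of_le one_lt_two (by norm_num) hpr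
    have ha : ((p - 1 : ℕ) : ℝ) ≤ (p : ℝ) := by exact_mod_cast Nat.sub_le p 1
    have hb : (0 : ℝ) ≤ ((p - 1 : ℕ) : ℝ) := Nat.cast_nonneg _
    have h4 : ((p - 1 : ℕ) : ℝ) ^ 4 ≤ (p : ℝ) ^ 4 := pow_le_pow_left₀ hb ha 4
    have h8 : (p : ℝ) ^ 4 ≤ (p : ℝ) ^ 8 := pow_le_pow_right₀ (by linarith) (by norm_num)
    have ht0 : (1 : ℝ) ≤ (t : ℝ) := by exact_mod_cast ht
    have hstep1 : ((colors.biUnion g).card : ℝ) ≤ ((p - 1 : ℕ) : ℝ) ^ 4 * (t : ℝ) := by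
      have := hcard
      exact_mod_cast this
    have hstep2 : ((p - 1 : ℕ) : ℝ) ^ 4 * (t : ℝ) ≤ (t : ℝ) * (p : ℝ) ^ 8 := by
      nlinarith
    have hp8 : (0 : ℝ) ≤ (t : ℝ) * (p : ℝ) ^ 8 := by positivity
    have hsq : (1 : ℝ) ≤ (Real.logb 2 (p : ℝ)) ^ 2 := by nlinarith
    have hstep3 : (t : ℝ) * (p : ℝ) ^ 8 ≤ (t : ℝ) * (p : ℝ) ^ 8 * (Real.logb 2 (p : ℝ)) ^ 2 :=
      le_mul_of_one_le_right hp8 hsq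
    linarith
  · intro i
    have hi : i ∈ Finset.univ.filter (fun i' => c i' = c i) := by simp
    obtain ⟨x, hxP, hxF⟩ := hg2 (c i) i hi
    exact ⟨x, Finset.mem_biUnion.mpr
      ⟨c i, Finset.mem_image_of_mem c (Finset.mem_univ i), hxP⟩, hxF⟩
end

section
/- For all integers t ≥ 1 and k ≥ 1 there is a constant C = C(t,k) > 0 such that for every integer p ≥ 2, every finite indexed family F of nonempty compact convex sets in the plane ℝ² satisfying (i) every pairwise-intersecting subfamily of F can be pierced by at most t points, (ii) the VC-dimension of F as a range space over ℝ² is at most k, and (iii) the (p,2)-property, can be pierced by at most C·p⁴·(log₂ p)² points. -/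
/-- The finite point set `Y` is shattered by the family `F`. -/
def ShatteredBy {ι α : Type*} (F : ι → Set α) (Y : Finset α) : Prop :=
  ∀ Z ⊆ Y, ∃ i, F i ∩ (Y : Set α) = (Z : Set α)

open Set Function
open scoped Pointwise

theorem exists_strictMono_fin_of_chain_card_le {α : Type*} [PartialOrder α] {N : ℕ}
    (hchain : ∀ s : Finset α, IsChain (· < ·) (s : Set α) → s.card ≤ N) :
    ∃ h : α → Fin N, StrictMono h := by
  classical
  have hlt : ∀ a : α, Order.height a < N := by
    intro a
    by_contra! hN
    obtain ⟨q, -, hq⟩ := Order.exists_series_of_le_height a hN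
    have hchain_q : IsChain (· < ·) ((Finset.univ.image q : Finset α) : Set α) := by
      simpa using (isChain_univ_iff.2 inferInstance).image_of_map_rel _ _ q
        fun _ _ hij => q.strictMono hij
    have := hchain _ hchain_q
    rw [Finset.card_image_of_injective _ q.strictMono.injective, Finset.card_univ,
      Fintype.card_fin] at this
    omega
  have hfin : ∀ a, ∃ n : Fin N, Order.height a = (n : ℕ) := fun a => by
    obtain ⟨n, hn⟩ := ENat.ne_top_iff_exists.1 ((hlt a).trans (ENat.natCast_lt_top N)).ne
    exact ⟨⟨n, by exact_mod_cast hn ▸ hlt a⟩, hn.symm⟩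
  choose h hh using hfin
  refine ⟨h, fun a b hab => ?_⟩
  have := Order.height_strictMono hab ((hlt a).trans (ENat.natCast_lt_top N))
  rw [hh, hh] at this
  exact_mod_cast this

theorem exists_coloring_of_chain_card_le {ι κ : Type*} (r : κ → ι → ι → Prop)
    [∀ k, IsStrictOrder ι (r k)] {N : ℕ}
    (hchain : ∀ k (s : Finset ι), IsChain (r k) (s : Set ι) → s.card ≤ N) :
    ∃ col : ι → κ → Fin N, ∀ i j k, col i = col j → ¬ r k i j := by
  have : ∀ k, ∃ h : ι → Fin N, ∀ i j, r k i j → h i < h j := fun k =>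
    letI := partialOrderOfSO (r k)
    exists_strictMono_fin_of_chain_card_le (hchain k)
  choose h hh using this
  exact ⟨fun i k => h k i, fun i j k hij hr => (hh k i j hr).ne (congrFun hij k)⟩

lemma exists_pierces_of_forall_fiber {ι κ α : Type*} [Fintype κ] (F : ι → Set α) (col : ι → κ)
    (t : ℕ) (h : ∀ c, ∃ P : Finset α, P.card ≤ t ∧ ∀ i, col i = c → ∃ x ∈ P, x ∈ F i) :
    ∃ P : Finset α, P.card ≤ Fintype.card κ * t ∧ Pierces F P := by
  classical
  choose P hPcard hP using h
  refine ⟨Finset.univ.biUnion P, ?_, fun i => ?_⟩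
  · calc _ ≤ ∑ c, (P c).card := Finset.card_biUnion_le
      _ ≤ ∑ _c : κ, t := Finset.sum_le_sum fun c _ => hPcard c
      _ = _ := by simp
  · obtain ⟨x, hx, hxi⟩ := hP (col i) i rfl
    exact ⟨x, Finset.mem_biUnion.2 ⟨col i, Finset.mem_univ _, hx⟩, hxi⟩

lemma HasPQ.card_lt_of_pairwise_disjoint {ι α : Type*} [Fintype ι] {F : ι → Set α} {p : ℕ}
    (h : HasPQ F p 2) {s : Finset ι} (hs : (s : Set ι).Pairwise (Disjoint on F)) : s.card < p := by
  classical
  by_contra! hps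
  obtain ⟨J, hJs, hJ⟩ := s.exists_subset_card_eq hps
  obtain ⟨K, hKJ, hK, x, hx⟩ := h.2 J hJ
  obtain ⟨i, j, hij, rfl⟩ := Finset.card_eq_two.1 hK
  simp only [Finset.mem_insert, Finset.mem_singleton, iInter_iInter_eq_or_left,
    iInter_iInter_eq_left, mem_inter_iff] at hx
  exact disjoint_left.1 (hs (hJs (hKJ (by simp))) (hJs (hKJ (by simp))) hij) hx.1 hx.2

/-- Chosen so that along a chain `u, v, w` the middle interval `[v.1, v.2]` covers the overlap of
the outer two (`IntervalPosition.Icc_inter_Icc_subset`); this makes `SliceBelow` transitive along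
the chain. -/
def IntervalPosition {α : Type*} [LinearOrder α] : Fin 4 → α × α → α × α → Prop
  | 0 => fun u v => v.1 ≤ u.1 ∧ u.2 ≤ v.2
  | 1 => fun u v => u.1 ≤ v.1 ∧ v.2 ≤ u.2
  | 2 => fun u v => u.1 < v.1 ∧ u.2 < v.2
  | 3 => fun u v => v.1 < u.1 ∧ v.2 < u.2

section IntervalPosition

variable {α : Type*} [LinearOrder α] {k : Fin 4} {u v w : α × α}

lemma IntervalPosition.trans (huv : IntervalPosition k u v) (hvw : IntervalPosition k v w) :
    IntervalPosition k u w := by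
  fin_cases k <;> exact ⟨by order [huv.1, huv.2, hvw.1, hvw.2],
    by order [huv.1, huv.2, hvw.1, hvw.2]⟩

lemma IntervalPosition.Icc_inter_Icc_subset (huv : IntervalPosition k u v)
    (hvw : IntervalPosition k v w) : Icc u.1 u.2 ∩ Icc w.1 w.2 ⊆ Icc v.1 v.2 := by
  rintro x ⟨⟨hux, hxu⟩, hwx, hxw⟩
  fin_cases k <;> exact ⟨by order [huv.1, huv.2, hvw.1, hvw.2],
    by order [huv.1, huv.2, hvw.1, hvw.2]⟩

lemma exists_intervalPosition (u v : α × α) : ∃ k, IntervalPosition k u v := by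
  rcases le_or_gt v.1 u.1 with h₁ | h₁ <;> rcases le_or_gt u.2 v.2 with h₂ | h₂
  · exact ⟨0, h₁, h₂⟩
  · rcases h₁.lt_or_eq with h₁ | h₁
    · exact ⟨3, h₁, h₂⟩
    · exact ⟨1, h₁.ge, h₂.le⟩
  · rcases h₂.lt_or_eq with h₂ | h₂
    · exact ⟨2, h₁, h₂⟩
    · exact ⟨1, h₁.le, h₂.ge⟩
  · exact ⟨1, h₁.le, h₂.le⟩

end IntervalPosition

def SliceBelow (A B : Set (ℝ × ℝ)) : Prop :=
  ∀ x y y', (x, y) ∈ A → (x, y') ∈ B → y < y'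

section SliceBelow

variable {A B C : Set (ℝ × ℝ)}

lemma SliceBelow.disjoint (h : SliceBelow A B) : Disjoint A B :=
  disjoint_left.2 fun z hA hB => (h z.1 z.2 z.2 hA hB).false

lemma SliceBelow.trans (hAB : SliceBelow A B) (hBC : SliceBelow B C)
    (h : Prod.fst '' A ∩ Prod.fst '' C ⊆ Prod.fst '' B) : SliceBelow A C := by
  intro x y y' hy hy'
  obtain ⟨⟨_, y''⟩, hB, rfl⟩ := h ⟨⟨_, hy, rfl⟩, ⟨_, hy', rfl⟩⟩
  exact (hAB _ _ _ hy hB).trans (hBC _ _ _ hB hy')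

lemma sliceBelow_or_sliceBelow_of_disjoint (hA : Convex ℝ A) (hB : Convex ℝ B)
    (h : Disjoint A B) : SliceBelow A B ∨ SliceBelow B A := by
  by_contra! hAB
  simp only [SliceBelow, not_forall, not_lt] at hAB
  obtain ⟨⟨x₁, a₁, b₁, ha₁, hb₁, hba₁⟩, ⟨x₂, b₂, a₂, hb₂, ha₂, hab₂⟩⟩ := hAB
  -- `A - B` meets the vertical axis in a convex set containing `a₁ - b₁ ≥ 0` and `a₂ - b₂ ≤ 0`.
  have hconv : Convex ℝ (LinearMap.inr ℝ ℝ ℝ ⁻¹' (A - B)) := (hA.sub hB).linear_preimage _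
  have hmem : ∀ x a b, (x, a) ∈ A → (x, b) ∈ B → a - b ∈ LinearMap.inr ℝ ℝ ℝ ⁻¹' (A - B) :=
    fun x a b ha hb => ⟨_, ha, _, hb, by simp⟩
  have h0 : (0 : ℝ) ∈ LinearMap.inr ℝ ℝ ℝ ⁻¹' (A - B) :=
    hconv.ordConnected.out (hmem _ _ _ ha₂ hb₂) (hmem _ _ _ ha₁ hb₁) ⟨by linarith, by linarith⟩
  exact zero_mem_sub_iff.1 (by simpa [Prod.zero_eq_mk] using h0) h

end SliceBelow

noncomputable def xSpan (A : Set (ℝ × ℝ)) : ℝ × ℝ :=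
  (sInf (Prod.fst '' A), sSup (Prod.fst '' A))

lemma fst_image_eq_Icc_xSpan {A : Set (ℝ × ℝ)} (hne : A.Nonempty) (hc : IsCompact A)
    (hv : Convex ℝ A) : Prod.fst '' A = Icc (xSpan A).1 (xSpan A).2 :=
  eq_Icc_of_connected_compact ((hv.linear_image (LinearMap.fst ℝ ℝ ℝ)).isConnected (hne.image _))
    (hc.image continuous_fst)

def SliceOrder {ι : Type*} (F : ι → Set (ℝ × ℝ)) (k : Fin 4) (i j : ι) : Prop :=
  SliceBelow (F i) (F j) ∧ IntervalPosition k (xSpan (F i)) (xSpan (F j))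

section SliceOrder

variable {ι : Type*} {F : ι → Set (ℝ × ℝ)}

lemma isStrictOrder_sliceOrder (hne : ∀ i, (F i).Nonempty) (hc : ∀ i, IsCompact (F i))
    (hv : ∀ i, Convex ℝ (F i)) (k : Fin 4) : IsStrictOrder ι (SliceOrder F k) where
  irrefl i h := (hne i).ne_empty (disjoint_self.1 h.1.disjoint)
  trans i j l hij hjl := by
    refine ⟨hij.1.trans hjl.1 ?_, hij.2.trans hjl.2⟩
    simp only [fst_image_eq_Icc_xSpan (hne _) (hc _) (hv _)]
    exact hij.2.Icc_inter_Icc_subset hjl.2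

lemma exists_sliceOrder_of_disjoint (hv : ∀ i, Convex ℝ (F i)) {i j : ι}
    (h : Disjoint (F i) (F j)) : ∃ k, SliceOrder F k i j ∨ SliceOrder F k j i := by
  rcases sliceBelow_or_sliceBelow_of_disjoint (hv i) (hv j) h with hij | hji
  · obtain ⟨k, hk⟩ := exists_intervalPosition (xSpan (F i)) (xSpan (F j))
    exact ⟨k, .inl ⟨hij, hk⟩⟩
  · obtain ⟨k, hk⟩ := exists_intervalPosition (xSpan (F j)) (xSpan (F i))
    exact ⟨k, .inr ⟨hji, hk⟩⟩

lemma IsChain.pairwise_disjoint_of_sliceOrder {k : Fin 4} {s : Set ι}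
    (hs : IsChain (SliceOrder F k) s) : s.Pairwise (Disjoint on F) :=
  hs.mono' fun _ _ h => h.elim (·.1.disjoint) (·.1.disjoint.symm)

end SliceOrder

lemma one_le_logb_two {x : ℝ} (hx : 2 ≤ x) : 1 ≤ Real.logb 2 x :=
  (Real.le_logb_iff_rpow_le one_lt_two (by linarith)).2 (by simpa using hx)

lemma natCast_pred_pow_four_mul_le (t p : ℕ) (hp : 2 ≤ p) :
    (((p - 1) ^ 4 * t : ℕ) : ℝ) ≤ t * (p : ℝ) ^ 4 * Real.logb 2 p ^ 2 := by
  have hlog : 1 ≤ Real.logb 2 p ^ 2 := one_le_pow₀ (one_le_logb_two (by exact_mod_cast hp))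
  calc (((p - 1) ^ 4 * t : ℕ) : ℝ) ≤ ((p ^ 4 * t : ℕ) : ℝ) := by gcongr; omega
    _ = t * (p : ℝ) ^ 4 * 1 := by push_cast; ring
    _ ≤ _ := by gcongr

theorem twotwo_to_p2_plane_vc_general (t k : ℕ) (ht : 1 ≤ t) :
    ∃ C : ℝ, 0 < C ∧
      ∀ p : ℕ, 2 ≤ p →
        ∀ (ι : Type) [Fintype ι], ∀ F : ι → Set (ℝ × ℝ),
          (∀ i, (F i).Nonempty) →
          (∀ i, IsCompact (F i)) →
          (∀ i, Convex ℝ (F i)) →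
          (∀ S : Finset ι, (∀ i ∈ S, ∀ j ∈ S, (F i ∩ F j).Nonempty) →
            ∃ P : Finset (ℝ × ℝ), P.card ≤ t ∧ ∀ i ∈ S, ∃ x ∈ P, x ∈ F i) →
          (∀ Y : Finset (ℝ × ℝ), Y.card = k + 1 → ¬ ShatteredBy F Y) →
          HasPQ F p 2 →
          ∃ P : Finset (ℝ × ℝ),
            (P.card : ℝ) ≤ C * (p : ℝ) ^ 4 * (Real.logb 2 (p : ℝ)) ^ 2 ∧
            Pierces F P := by
  classical
  refine ⟨t, by exact_mod_cast ht, fun p hp ι _ F hne hc hv h22 _ hpq => ?_⟩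
  have := isStrictOrder_sliceOrder hne hc hv
  obtain ⟨col, hcol⟩ := exists_coloring_of_chain_card_le (SliceOrder F) (N := p - 1)
    fun _ _ hs => Nat.le_sub_one_of_lt (hpq.card_lt_of_pairwise_disjoint
      hs.pairwise_disjoint_of_sliceOrder)
  obtain ⟨P, hPcard, hP⟩ := exists_pierces_of_forall_fiber F col t fun c => by
    obtain ⟨P, hPt, hPc⟩ := h22 {i | col i = c} fun i hi j hj => by
      rw [← not_disjoint_iff_nonempty_inter]
      intro hij
      obtain ⟨o, h | h⟩ := exists_sliceOrder_of_disjoint hv hij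
      · exact hcol i j o (by simp_all) h
      · exact hcol j i o (by simp_all) h
    exact ⟨P, hPt, fun i hi => hPc i (by simpa using hi)⟩
  refine ⟨P, ?_, hP⟩
  calc (P.card : ℝ) ≤ (((p - 1) ^ 4 * t : ℕ) : ℝ) := Nat.cast_le.2 (by simpa using hPcard)
    _ ≤ _ := natCast_pred_pow_four_mul_le t p hp

/-- Theorem 1.8(3): for all `t ≥ 1`, `k ≥ 1` there is `C = C(t,k) > 0` such that
every finite family of nonempty compact convex sets in the plane admitting a
`(2,2)`-theorem with constant `t`, with VC-dimension at most `k` (no `k+1`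
points are shattered), and satisfying the `(p,2)`-property, can be pierced by
`C·p⁴·(log₂ p)²` points. -/
theorem twotwo_to_p2_plane_vc (t k : ℕ) (ht : 1 ≤ t) (hk : 1 ≤ k) :
    ∃ C : ℝ, 0 < C ∧
      ∀ p : ℕ, 2 ≤ p →
        ∀ (ι : Type) [Fintype ι], ∀ F : ι → Set (ℝ × ℝ),
          (∀ i, (F i).Nonempty) →
          (∀ i, IsCompact (F i)) →
          (∀ i, Convex ℝ (F i)) →
          (∀ S : Finset ι, (∀ i ∈ S, ∀ j ∈ S, (F i ∩ F j).Nonempty) →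
            ∃ P : Finset (ℝ × ℝ), P.card ≤ t ∧ ∀ i ∈ S, ∃ x ∈ P, x ∈ F i) →
          (∀ Y : Finset (ℝ × ℝ), Y.card = k + 1 → ¬ ShatteredBy F Y) →
          HasPQ F p 2 →
          ∃ P : Finset (ℝ × ℝ),
            (P.card : ℝ) ≤ C * (p : ℝ) ^ 4 * (Real.logb 2 (p : ℝ)) ^ 2 ∧
            Pierces F P :=
  twotwo_to_p2_plane_vc_general t k ht
end

section
/- Let F = (F_i)_{i∈I} be a finite indexed family of nonempty sets with Helly number 2 (every pairwise-intersecting subfamily has a common point), let λ = ν(F) be its packing number, and let p ≥ q ≥ 2 be integers with |I| ≥ p, q − 1 ≥ 1 and p − λ ≥ q − 1. Suppose F satisfies the (p,q)-property, and suppose there is an integer s ≥ 1 such that every subfamily of F satisfying the (p−λ, q−1)-property can be pierced by at most s points. Then F can be pierced by at most s + λ − 1 points. -/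
/-- The `(p,q)`-property for the subfamily indexed by `S`. -/
def HasPQOn {ι α : Type*} (F : ι → Set α) (S : Finset ι) (p q : ℕ) : Prop :=
  p ≤ S.card ∧
    ∀ J ⊆ S, J.card = p → ∃ K ⊆ J, K.card = q ∧ (⋂ k ∈ K, F k).Nonempty

/-!
Fix a maximum packing `L`. A subfamily with a common point contains at most one member of `L`,
so (as `q ≥ 2`) `|L| < p`, and completing a `(p - λ)`-subset of the remaining members by `L`
shows that they satisfy the `(p - λ, q - 1)`-property; let `P` be a piercing set of size at most
`s` for them. Remove one point `x` of `P`. The members that lose their piercing point all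
contain `x`, and by maximality of `L` each meets some member `F t` of `L`. The sets of this kind
meeting a fixed `F t`, together with `F t`, pairwise intersect, so Helly number two gives one point
of `F t` piercing all of them: `λ` such points replace `x`.
-/

def HasHellyNumberTwo {ι α : Type*} (F : ι → Set α) : Prop :=
  ∀ S : Finset ι, (∀ i ∈ S, ∀ j ∈ S, (F i ∩ F j).Nonempty) → (⋂ i ∈ S, F i).Nonempty

section

variable {ι α : Type*} {F : ι → Set α}

theorem Finset.pairwiseDisjoint_coe_iff_inter_eq_empty {L : Finset ι} :
    (L : Set ι).PairwiseDisjoint F ↔ ∀ i ∈ L, ∀ j ∈ L, i ≠ j → F i ∩ F j = ∅ := by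
  simp only [Set.PairwiseDisjoint, Set.Pairwise, Finset.mem_coe, Function.onFun,
    Set.disjoint_iff_inter_eq_empty]

theorem card_inter_le_one_of_pairwiseDisjoint [DecidableEq ι] {K L : Finset ι}
    (hL : (L : Set ι).PairwiseDisjoint F) (hK : (⋂ k ∈ K, F k).Nonempty) :
    (K ∩ L).card ≤ 1 := by
  obtain ⟨w, hw⟩ := hK
  rw [Set.mem_iInter₂] at hw
  refine Finset.card_le_one.2 fun a ha b hb => by_contra fun hab => ?_
  rw [Finset.mem_inter] at ha hb
  exact Set.disjoint_left.1 (hL ha.2 hb.2 hab) (hw a ha.1) (hw b hb.1)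

theorem exists_inter_nonempty_of_pairwiseDisjoint_card_le {L : Finset ι}
    (hmax : ∀ S : Finset ι, (S : Set ι).PairwiseDisjoint F → S.card ≤ L.card)
    (hL : (L : Set ι).PairwiseDisjoint F) {i : ι} (hi : i ∉ L) :
    ∃ t ∈ L, (F i ∩ F t).Nonempty := by
  classical
  by_contra! h
  have hins : ((insert i L : Finset ι) : Set ι).PairwiseDisjoint F := by
    rw [Finset.coe_insert]
    exact hL.insert fun t ht _ => Set.disjoint_iff_inter_eq_empty.2 (h t ht)
  have := hmax _ hins
  rw [Finset.card_insert_of_notMem hi] at this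
  omega

namespace HasPQ

variable [Fintype ι] {p q : ℕ}

theorem card_lt_of_pairwiseDisjoint (hpq : HasPQ F p q) (hq : 2 ≤ q) {L : Finset ι}
    (hL : (L : Set ι).PairwiseDisjoint F) : L.card < p := by
  classical
  by_contra! hpL
  obtain ⟨J, hJL, hJ⟩ := Finset.exists_subset_card_eq hpL
  obtain ⟨K, hKJ, hK, hKF⟩ := hpq.2 J hJ
  have := card_inter_le_one_of_pairwiseDisjoint hL hKF
  rw [Finset.inter_eq_left.2 (hKJ.trans hJL)] at this
  omega

theorem hasPQOn_compl [DecidableEq ι] (hpq : HasPQ F p q) {L : Finset ι}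
    (hL : (L : Set ι).PairwiseDisjoint F) (hLp : L.card ≤ p) :
    HasPQOn F Lᶜ (p - L.card) (q - 1) := by
  refine ⟨by rw [Finset.card_compl]; have := hpq.1; omega, fun J hJ hJcard => ?_⟩
  have hJL : Disjoint J L := Finset.disjoint_of_subset_left hJ disjoint_compl_left
  obtain ⟨K, hKJL, hK, hKF⟩ := hpq.2 (J ∪ L) (by rw [Finset.card_union_of_disjoint hJL]; omega)
  have hKL := card_inter_le_one_of_pairwiseDisjoint hL hKF
  have hsplit := Finset.card_sdiff_add_card_inter K L
  obtain ⟨K', hK'K, hK'⟩ := Finset.exists_subset_card_eq (s := K \ L) (n := q - 1) (by omega)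
  refine ⟨K', fun k hk => ?_, hK', hKF.mono (Set.biInter_subset_biInter_left fun k hk =>
    (Finset.mem_sdiff.1 (hK'K hk)).1)⟩
  obtain ⟨hkK, hkL⟩ := Finset.mem_sdiff.1 (hK'K hk)
  exact (Finset.mem_union.1 (hKJL hkK)).resolve_right hkL

end HasPQ

namespace HasHellyNumberTwo

theorem exists_mem_of_forall_mem (helly : HasHellyNumberTwo F) {t : ι} (ht : (F t).Nonempty)
    {A : Finset ι} {x : α} (hxA : ∀ i ∈ A, x ∈ F i) (hA : ∀ i ∈ A, (F i ∩ F t).Nonempty) :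
    ∃ z ∈ F t, ∀ i ∈ A, z ∈ F i := by
  classical
  have hpair : ∀ i ∈ insert t A, ∀ j ∈ insert t A, (F i ∩ F j).Nonempty := by
    intro i hi j hj
    rcases Finset.mem_insert.1 hi with rfl | hiA <;> rcases Finset.mem_insert.1 hj with rfl | hjA
    · rwa [Set.inter_self]
    · rw [Set.inter_comm]; exact hA j hjA
    · exact hA i hiA
    · exact ⟨x, hxA i hiA, hxA j hjA⟩
  obtain ⟨z, hz⟩ := helly _ hpair
  rw [Set.mem_iInter₂] at hz
  exact ⟨z, hz t (Finset.mem_insert_self t A), fun i hi => hz i (Finset.mem_insert_of_mem hi)⟩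

theorem exists_pierce_erase_union [DecidableEq α] (helly : HasHellyNumberTwo F) {L S : Finset ι}
    (hL : ∀ t ∈ L, (F t).Nonempty) (hdom : ∀ i ∈ S, ∃ t ∈ L, (F i ∩ F t).Nonempty)
    {P : Finset α} (hP : ∀ i ∈ S, ∃ y ∈ P, y ∈ F i) (x : α) :
    ∃ Z : Finset α, Z.card ≤ L.card ∧
      (∀ t ∈ L, ∃ z ∈ Z, z ∈ F t) ∧ ∀ i ∈ S, ∃ y ∈ P.erase x ∪ Z, y ∈ F i := by
  classical
  have hz : ∀ t ∈ L, ∃ z ∈ F t, ∀ i ∈ S.filter (fun i => x ∈ F i ∧ (F i ∩ F t).Nonempty),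
      z ∈ F i := fun t ht =>
    helly.exists_mem_of_forall_mem (hL t ht) (fun i hi => (Finset.mem_filter.1 hi).2.1)
      (fun i hi => (Finset.mem_filter.1 hi).2.2)
  choose z hzt hzS using hz
  refine ⟨L.attach.image fun t : L => z t t.2, Finset.card_image_le.trans_eq L.card_attach,
    fun t ht => ⟨z t ht, Finset.mem_image_of_mem _ (L.mem_attach ⟨t, ht⟩), hzt t ht⟩,
    fun i hi => ?_⟩
  obtain ⟨y, hyP, hyi⟩ := hP i hi
  by_cases hyx : y = x
  · obtain ⟨t, ht, hit⟩ := hdom i hi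
    refine ⟨z t ht, Finset.mem_union_right _ (Finset.mem_image_of_mem _ (L.mem_attach ⟨t, ht⟩)),
      hzS t ht i ?_⟩
    exact Finset.mem_filter.2 ⟨hi, hyx ▸ hyi, hit⟩
  · exact ⟨y, Finset.mem_union_left _ (Finset.mem_erase.2 ⟨hyx, hyP⟩), hyi⟩

end HasHellyNumberTwo

end

theorem wegner_dolnikov_observation_general {ι α : Type} [Fintype ι] (F : ι → Set α)
    (hne : ∀ i, (F i).Nonempty)
    (helly : ∀ S : Finset ι,
      (∀ i ∈ S, ∀ j ∈ S, (F i ∩ F j).Nonempty) → (⋂ i ∈ S, F i).Nonempty)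
    (lam : ℕ)
    (hpack : IsGreatest {n : ℕ | ∃ S : Finset ι, S.card = n ∧
      ∀ i ∈ S, ∀ j ∈ S, i ≠ j → F i ∩ F j = ∅} lam)
    (p q : ℕ) (hq2 : 2 ≤ q)
    (s : ℕ)
    (hsub : ∀ S : Finset ι, HasPQOn F S (p - lam) (q - 1) →
      ∃ P : Finset α, P.card ≤ s ∧ ∀ i ∈ S, ∃ x ∈ P, x ∈ F i)
    (hpq : HasPQ F p q) :
    ∃ P : Finset α, P.card ≤ s + lam - 1 ∧ Pierces F P := by
  classical
  obtain ⟨⟨L, rfl, hL⟩, hmax⟩ := hpack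
  rw [← Finset.pairwiseDisjoint_coe_iff_inter_eq_empty] at hL
  have hLp := hpq.card_lt_of_pairwiseDisjoint hq2 hL
  obtain ⟨P₀, hP₀, hP₀S⟩ := hsub Lᶜ (hpq.hasPQOn_compl hL hLp.le)
  obtain ⟨i₀, hi₀⟩ : Lᶜ.Nonempty := by
    rw [← Finset.card_pos, Finset.card_compl]; have := hpq.1; omega
  obtain ⟨x, hx, -⟩ := hP₀S i₀ hi₀
  have hdom : ∀ i ∈ Lᶜ, ∃ t ∈ L, (F i ∩ F t).Nonempty := fun i hi =>
    exists_inter_nonempty_of_pairwiseDisjoint_card_le (fun S hS => hmax ⟨S, rfl,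
      Finset.pairwiseDisjoint_coe_iff_inter_eq_empty.1 hS⟩) hL (Finset.mem_compl.1 hi)
  obtain ⟨Z, hZ, hZL, hZS⟩ :=
    HasHellyNumberTwo.exists_pierce_erase_union helly (fun t _ => hne t) hdom hP₀S x
  refine ⟨P₀.erase x ∪ Z, ?_, fun i => ?_⟩
  · have hP₀pos : 0 < P₀.card := Finset.card_pos.2 ⟨x, hx⟩
    calc (P₀.erase x ∪ Z).card ≤ (P₀.erase x).card + Z.card := Finset.card_union_le _ _
      _ = P₀.card - 1 + Z.card := by rw [Finset.card_erase_of_mem hx]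
      _ ≤ s + L.card - 1 := by omega
  · by_cases hi : i ∈ L
    · obtain ⟨z, hz, hzi⟩ := hZL i hi
      exact ⟨z, Finset.mem_union_right _ hz, hzi⟩
    · exact hZS i (Finset.mem_compl.2 hi)

/-- Observation 2.1 (Wegner, Dol'nikov): for a family `F` with Helly number 2
and packing number `λ`, one has `HD_F(p,q) ≤ HD_F(p-λ, q-1) + λ - 1`. -/
theorem wegner_dolnikov_observation {ι α : Type} [Fintype ι] (F : ι → Set α)
    (hne : ∀ i, (F i).Nonempty)
    (helly : ∀ S : Finset ι,
      (∀ i ∈ S, ∀ j ∈ S, (F i ∩ F j).Nonempty) → (⋂ i ∈ S, F i).Nonempty)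
    (lam : ℕ)
    (hpack : IsGreatest {n : ℕ | ∃ S : Finset ι, S.card = n ∧
      ∀ i ∈ S, ∀ j ∈ S, i ≠ j → F i ∩ F j = ∅} lam)
    (p q : ℕ) (hq2 : 2 ≤ q) (hqp : q ≤ p) (hcard : p ≤ Fintype.card ι)
    (hq1 : 1 ≤ q - 1) (hlam : q - 1 ≤ p - lam)
    (s : ℕ) (hs : 1 ≤ s)
    (hsub : ∀ S : Finset ι, HasPQOn F S (p - lam) (q - 1) →
      ∃ P : Finset α, P.card ≤ s ∧ ∀ i ∈ S, ∃ x ∈ P, x ∈ F i)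
    (hpq : HasPQ F p q) :
    ∃ P : Finset α, P.card ≤ s + lam - 1 ∧ Pierces F P :=
  wegner_dolnikov_observation_general F hne helly lam hpack p q hq2 s hsub hpq
end

section
/- Let F = (F_i)_{i∈I} be a finite indexed family of nonempty sets satisfying the (p,q)-property, and let p' ≤ p and q' ≤ q be positive integers with q' ≤ p'. Then either F satisfies the (p',q')-property, or there exists J ⊆ I with |J| = p' such that no q' of the sets indexed by J have a common point, and in this case the subfamily (F_i)_{i∈I∖J} satisfies the (p−p', q−q'+1)-property. -/
/-- Observation 2.4 (combinatorial dichotomy): if `F` satisfies the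
`(p,q)`-property and `q' ≤ p'`, `p' ≤ p`, `q' ≤ q`, then either `F` satisfies
the `(p',q')`-property, or there is a set `J` of `p'` indices containing no
intersecting `q'`-tuple, in which case the subfamily indexed by `I ∖ J`
satisfies the `(p-p', q-q'+1)`-property. -/
theorem combinatorial_dichotomy {ι α : Type} [Fintype ι] [DecidableEq ι]
    (F : ι → Set α) (hne : ∀ i, (F i).Nonempty)
    (p q p' q' : ℕ) (hp'1 : 1 ≤ p') (hq'1 : 1 ≤ q')
    (hp' : p' ≤ p) (hq' : q' ≤ q) (hq'p' : q' ≤ p')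
    (hpq : HasPQ F p q) :
    HasPQOn F Finset.univ p' q' ∨
      ∃ J : Finset ι, J.card = p' ∧
        (∀ K ⊆ J, K.card = q' → ¬ (⋂ k ∈ K, F k).Nonempty) ∧
        HasPQOn F Jᶜ (p - p') (q - q' + 1) := by

  by_cases h : HasPQOn F Finset.univ p' q'
  · exact Or.inl h
  · right
    have hcard : p' ≤ (Finset.univ : Finset ι).card := by
      simpa using hp'.trans hpq.1
    rw [HasPQOn, not_and] at h
    have h2 := h hcard
    push_neg at h2
    obtain ⟨J, -, hJcard, hJno⟩ := h2
    have hJno' : ∀ K ⊆ J, K.card = q' → ¬ (⋂ k ∈ K, F k).Nonempty := by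
      intro K hK hKc
      rw [Set.not_nonempty_iff_eq_empty]
      exact hJno K hK hKc
    refine ⟨J, hJcard, hJno', ?_, ?_⟩
    · rw [Finset.card_compl, hJcard]
      exact Nat.sub_le_sub_right hpq.1 p'
    · intro J' hJ' hJ'card
      have hdisj : Disjoint J J' := by
        rw [Finset.disjoint_right]
        intro a ha
        exact (Finset.mem_compl.mp (hJ' ha))
      have hT : (J ∪ J').card = p := by
        rw [Finset.card_union_of_disjoint hdisj, hJcard, hJ'card]
        omega
      obtain ⟨K, hKT, hKc, x, hx⟩ := hpq.2 (J ∪ J') hT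
      have hxK : ∀ k ∈ K, x ∈ F k := by
        intro k hk
        exact Set.mem_iInter₂.mp hx k hk
      have hKJ : (K ∩ J).card ≤ q' - 1 := by
        by_contra hc
        push_neg at hc
        have : q' ≤ (K ∩ J).card := by omega
        obtain ⟨K', hK'sub, hK'c⟩ := Finset.exists_subset_card_eq this
        refine hJno' K' (hK'sub.trans Finset.inter_subset_right) hK'c ?_
        exact ⟨x, Set.mem_iInter₂.mpr fun k hk =>
          hxK k (Finset.inter_subset_left (hK'sub hk))⟩
      have hsplit : K = (K ∩ J) ∪ (K ∩ J') := by
        rw [← Finset.inter_union_distrib_left]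
        exact (Finset.inter_eq_left.mpr hKT).symm
      have hKJ' : q - q' + 1 ≤ (K ∩ J').card := by
        have := Finset.card_union_le (K ∩ J) (K ∩ J')
        rw [← hsplit, hKc] at this
        omega
      obtain ⟨K', hK'sub, hK'c⟩ := Finset.exists_subset_card_eq hKJ'
      refine ⟨K', hK'sub.trans Finset.inter_subset_right, hK'c,
        ⟨x, Set.mem_iInter₂.mpr fun k hk =>
          hxK k (Finset.inter_subset_left (hK'sub hk))⟩⟩
end

section
/- For every real c > 0 and all integers p ≥ q ≥ 2 with q ≥ c·log₂ p, every finite indexed family of axis-parallel rectangles in the plane satisfying the (p,q)-property can be pierced by a finite set of at most p − q + 1 + 2p/c points. -/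
/-- An axis-parallel rectangle in the plane: a nonempty product of two closed
bounded intervals, i.e. `Set.Icc a b` in `ℝ × ℝ` with `a ≤ b`. -/
def IsRect (A : Set (ℝ × ℝ)) : Prop :=
  ∃ a b : ℝ × ℝ, a ≤ b ∧ A = Set.Icc a b

/-!
Call a subfamily `q`-free if no `q` of its members share a point; by the `(p,q)`-property every
`q`-free subfamily has fewer than `p` members. Splitting by vertical lines so that both sides
have half this bound, and greedily piercing the rectangles that cross each line by one point per
member of a pairwise disjoint subfamily, yields at most `log₂ p + 1` levels of pairwise disjoint
witnesses, one witness per point. Witnesses sharing a point lie on distinct levels, so `j < q`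
levels carry at most `p - q + j` witnesses; grouping the levels into blocks of `q - 1` gives the
bound.
-/

open Finset

variable {ι α : Type*}

def QFree (F : ι → Set α) (q : ℕ) (K : Finset ι) : Prop :=
  ∀ L ⊆ K, #L = q → ¬(⋂ k ∈ L, F k).Nonempty

def QFreeCardLE (F : ι → Set α) (q m : ℕ) (G : Finset ι) : Prop :=
  ∀ K ⊆ G, QFree F q K → #K ≤ m

variable {F : ι → Set α} {q m : ℕ}

theorem QFree.union {K W : Finset ι} [DecidableEq ι] (hK : QFree F q K) (hW : QFree F q W)
    (hsep : ∀ i ∈ K, ∀ j ∈ W, Disjoint (F i) (F j)) : QFree F q (K ∪ W) := by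
  rintro L hL hLq ⟨z, hz⟩
  have hzL : ∀ i ∈ L, z ∈ F i := fun i hi => Set.mem_iInter₂.mp hz i hi
  by_cases hLK : L ⊆ K
  · exact hK L hLK hLq ⟨z, hz⟩
  by_cases hLW : L ⊆ W
  · exact hW L hLW hLq ⟨z, hz⟩
  obtain ⟨i, hiL, hiW⟩ := not_subset.mp hLW
  obtain ⟨j, hjL, hjK⟩ := not_subset.mp hLK
  have hiK : i ∈ K := (mem_union.mp (hL hiL)).resolve_right hiW
  have hjW : j ∈ W := (mem_union.mp (hL hjL)).resolve_left hjK
  exact Set.disjoint_left.mp (hsep i hiK j hjW) (hzL i hiL) (hzL j hjL)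

theorem QFreeCardLE.eq_empty_of_zero {G : Finset ι} (hq : 1 < q) (h : QFreeCardLE F q 0 G) :
    G = ∅ := by
  refine eq_empty_of_forall_notMem fun i hi => ?_
  have hfree : QFree F q {i} := fun L hL hLq => by
    have := card_le_card hL
    rw [card_singleton] at this
    omega
  simpa using h {i} (singleton_subset_iff.mpr hi) hfree

/-- A proper coloring of the intersection graph of the subfamily `D`. -/
def IsIntersectionColoring {κ : Type*} (F : ι → Set α) (D : Finset ι) (col : ι → κ) : Prop :=
  (D : Set ι).Pairwise fun i j => col i = col j → Disjoint (F i) (F j)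

section IsIntersectionColoring

variable {κ : Type*} {D D' : Finset ι} {col col' : ι → κ}

theorem IsIntersectionColoring.mono (h : IsIntersectionColoring F D col) (hD : D' ⊆ D) :
    IsIntersectionColoring F D' col :=
  Set.Pairwise.mono (coe_subset.mpr hD) h

theorem IsIntersectionColoring.union [DecidableEq ι] (h : IsIntersectionColoring F D col)
    (h' : IsIntersectionColoring F D' col') (hsep : ∀ i ∈ D, ∀ j ∈ D', Disjoint (F i) (F j)) :
    IsIntersectionColoring F (D ∪ D') fun i => if i ∈ D then col i else col' i := by
  rw [IsIntersectionColoring, coe_union, Set.pairwise_union]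
  refine ⟨fun i hi j hj hij hc => h hi hj hij (by simpa [mem_coe.mp hi, mem_coe.mp hj] using hc),
    fun i hi j hj hij hc => ?_, fun i hi j hj _ => ⟨fun _ => hsep i hi j hj,
      fun _ => (hsep i hi j hj).symm⟩⟩
  by_cases hiD : i ∈ D
  · exact hsep i hiD j hj
  by_cases hjD : j ∈ D
  · exact (hsep j hjD i hi).symm
  exact h' hi hj hij (by simpa [hiD, hjD] using hc)

theorem IsIntersectionColoring.union_of_pairwiseDisjoint [DecidableEq ι] {D₀ : Finset ι}
    (h : IsIntersectionColoring F D col) (h₀ : (D₀ : Set ι).PairwiseDisjoint F)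
    (hdisj : Disjoint D₀ D) {c : κ} (hc : ∀ i ∈ D, col i ≠ c) :
    IsIntersectionColoring F (D₀ ∪ D) fun i => if i ∈ D₀ then c else col i := by
  have hD₀ : ∀ i ∈ D, i ∉ D₀ := fun i hi hi₀ => disjoint_left.mp hdisj hi₀ hi
  rw [IsIntersectionColoring, coe_union, Set.pairwise_union]
  refine ⟨fun i hi j hj hij _ => h₀ hi hj hij, fun i hi j hj hij hcij => ?_,
    fun i hi j hj _ => ?_⟩
  · exact h hi hj hij (by simpa [hD₀ i hi, hD₀ j hj] using hcij)
  · have hj₀ := hD₀ j hj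
    have hi₀ : i ∈ D₀ := hi
    simp only [hi₀, hj₀, if_true, if_false]
    exact ⟨fun hcj => absurd hcj.symm (hc j hj), fun hcj => absurd hcj (hc j hj)⟩

end IsIntersectionColoring

section PQ

variable [Fintype ι] {p : ℕ}

theorem HasPQ.qFreeCardLE (h : HasPQ F p q) : QFreeCardLE F q (p - 1) univ := by
  intro K _ hK
  by_contra! hp
  obtain ⟨J, hJK, hJ⟩ := K.exists_subset_card_eq (n := p) (by omega)
  obtain ⟨L, hLJ, hL, hne⟩ := h.2 J hJ
  exact hK L (hLJ.trans hJK) hL hne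

/-- Otherwise some `p` members, `p - q + j + 1` of them in `E`, contain `q` with a common point;
at least `j + 1` of these lie in `E`, so two of them have the same color. -/
theorem HasPQ.card_add_le_of_coloring {κ : Type*} [DecidableEq ι] [DecidableEq κ]
    (h : HasPQ F p q) {E : Finset ι} (col : ι → κ)
    (hcol : IsIntersectionColoring F E col)
    (hE : #(E.image col) < q) : #E + q ≤ p + #(E.image col) := by
  by_contra! hlt
  set j := #(E.image col)
  obtain ⟨E', hE'E, hE'⟩ := E.exists_subset_card_eq (n := p + j + 1 - q) (by omega)
  obtain ⟨J, hE'J, -, hJ⟩ :=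
    exists_subsuperset_card_eq (n := p) (subset_univ E') (by omega) (by simpa using h.1)
  obtain ⟨K, hKJ, hK, z, hz⟩ := h.2 J hJ
  have hzK : ∀ i ∈ K, z ∈ F i := fun i hi => Set.mem_iInter₂.mp hz i hi
  have hout : #(K \ E') ≤ p - #E' := by
    rw [← hJ, ← card_sdiff_of_subset hE'J]
    exact card_le_card (sdiff_subset_sdiff hKJ le_rfl)
  have hin : j < #(K ∩ E') := by
    have := card_sdiff_add_card_inter K E'
    omega
  obtain ⟨x, hx, y, hy, hxy, hcxy⟩ := exists_ne_map_eq_of_card_lt_of_maps_to hin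
    (f := col) fun i hi => mem_image_of_mem col (hE'E (mem_inter.mp hi).2)
  exact Set.disjoint_left.mp
    (hcol (hE'E (mem_inter.mp hx).2) (hE'E (mem_inter.mp hy).2) hxy hcxy)
    (hzK x (mem_inter.mp hx).1) (hzK y (mem_inter.mp hy).1)

/-- Group the colors into blocks of `q - 1` consecutive ones; each block covers at most `p - 1`
members. -/
theorem HasPQ.card_le_mul_of_color_le [DecidableEq ι] (h : HasPQ F p q) (hq : 2 ≤ q)
    {E : Finset ι} (col : ι → ℕ)
    (hcol : IsIntersectionColoring F E col)
    {L : ℕ} (hL : ∀ i ∈ E, col i ≤ L) : #E ≤ (p - 1) * (L / (q - 1) + 1) := by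
  have hfiber (b : ℕ) : #{i ∈ E | col i / (q - 1) = b} ≤ p - 1 := by
    set Eb := {i ∈ E | col i / (q - 1) = b}
    have hcolors : #(Eb.image col) ≤ q - 1 := by
      refine (card_le_card_of_injOn (· % (q - 1)) (fun c _ => ?_) ?_).trans (card_range _).le
      · exact mem_range.mpr (Nat.mod_lt _ (by omega))
      intro c hc c' hc' hmod
      obtain ⟨i, hi, rfl⟩ := mem_image.mp hc
      obtain ⟨i', hi', rfl⟩ := mem_image.mp hc'
      rw [← Nat.div_add_mod (col i) (q - 1), ← Nat.div_add_mod (col i') (q - 1),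
        (mem_filter.mp hi).2, (mem_filter.mp hi').2]
      exact congrArg _ hmod
    have := h.card_add_le_of_coloring (E := Eb) col (hcol.mono (filter_subset _ _))
      (by omega)
    omega
  calc #E ≤ (p - 1) * #(E.image (col · / (q - 1))) :=
        card_le_mul_card_image E _ fun b _ => hfiber b
    _ ≤ (p - 1) * #(range (L / (q - 1) + 1)) := by
        gcongr
        intro b hb
        obtain ⟨i, hi, rfl⟩ := mem_image.mp hb
        exact mem_range.mpr (Nat.lt_succ_of_le (Nat.div_le_div_right (hL i hi)))
    _ = (p - 1) * (L / (q - 1) + 1) := by rw [card_range]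

theorem HasPQ.card_le_of_color_le [DecidableEq ι] (h : HasPQ F p q) (hq : 2 ≤ q) (hqp : q ≤ p)
    {E : Finset ι} (col : ι → ℕ)
    (hcol : IsIntersectionColoring F E col)
    {L : ℕ} (hL : ∀ i ∈ E, col i ≤ L) : (#E : ℝ) ≤ p - q + 1 + 2 * p * L / q := by
  have key : q * (#E + q) ≤ q * (p + 1) + 2 * p * L := by
    rcases lt_or_ge L (q - 1) with hLq | hLq
    · have hcolors : #(E.image col) ≤ L + 1 := by
        refine (card_le_card fun c hc => ?_).trans (card_range (L + 1)).le
        obtain ⟨i, hi, rfl⟩ := mem_image.mp hc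
        exact mem_range.mpr (Nat.lt_succ_of_le (hL i hi))
      have := h.card_add_le_of_coloring col hcol (by omega)
      nlinarith
    · have hE := h.card_le_mul_of_color_le hq col hcol hL
      set K := L / (q - 1)
      have hK : (1 : ℤ) ≤ K := by exact_mod_cast (Nat.one_le_div_iff (by omega)).mpr hLq
      have hKL : K * (q - 1) ≤ L := Nat.div_mul_le_self L (q - 1)
      have hq' : (2 : ℤ) ≤ q := by exact_mod_cast hq
      have hqp' : (q : ℤ) ≤ p := by exact_mod_cast hqp
      zify [(by omega : 1 ≤ p), (by omega : 1 ≤ q)] at hE hKL ⊢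
      nlinarith [mul_le_mul_of_nonneg_left hE (by positivity : (0 : ℤ) ≤ q),
        mul_le_mul_of_nonneg_left hKL (by positivity : (0 : ℤ) ≤ 2 * p),
        mul_nonneg (sub_nonneg.mpr hK) (by nlinarith : (0 : ℤ) ≤ p * (q - 2) + q),
        mul_nonneg (sub_nonneg.mpr hqp') (sub_nonneg.mpr hq')]
  have hq0 : (0 : ℝ) < q := by positivity
  have hkey : (q : ℝ) * (#E + q) ≤ q * (p + 1) + 2 * p * L := by exact_mod_cast key
  have : (#E : ℝ) - p + q - 1 ≤ 2 * p * L / q := by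
    rw [le_div_iff₀ hq0]
    linarith
  linarith

end PQ

section Split

variable {β : Type*} [LinearOrder β] {G : Finset ι}

/-- Take for `t` the largest `l`-value whose left part is balanced: a large `q`-free set on the
right would combine with a large one left of its least `l`-value. -/
theorem QFreeCardLE.exists_split (h : QFreeCardLE F q m G) (hG : G.Nonempty)
    (l r : ι → β) (hlr : ∀ i, l i ≤ r i)
    (hsep : ∀ i j, r i < l j → Disjoint (F i) (F j)) :
    ∃ t, QFreeCardLE F q (m / 2) {i ∈ G | r i < t} ∧
      QFreeCardLE F q (m / 2) {i ∈ G | t < l i} := by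
  classical
  set T := (G.image l).filter fun x => QFreeCardLE F q (m / 2) {i ∈ G | r i < x}
  obtain ⟨i₀, hi₀, hmin⟩ := G.exists_min_image l hG
  have hT : T.Nonempty := by
    refine ⟨l i₀, mem_filter.mpr ⟨mem_image_of_mem l hi₀, fun K hK _ => ?_⟩⟩
    have hempty : {i ∈ G | r i < l i₀} = ∅ :=
      filter_eq_empty_iff.mpr fun i hi => not_lt.mpr ((hmin i hi).trans (hlr i))
    rw [hempty, subset_empty] at hK
    simp [hK]
  refine ⟨T.max' hT, (mem_filter.mp (T.max'_mem hT)).2, fun K hK hKfree => ?_⟩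
  by_contra! hKm
  obtain ⟨k, hk, hkmin⟩ := K.exists_min_image l (card_pos.mp (by omega))
  obtain ⟨hkG, hkt⟩ := mem_filter.mp (hK hk)
  have hbad : ¬QFreeCardLE F q (m / 2) {i ∈ G | r i < l k} := fun hgood =>
    (T.le_max' _ (mem_filter.mpr ⟨mem_image_of_mem l hkG, hgood⟩)).not_gt hkt
  simp only [QFreeCardLE, not_forall, not_le] at hbad
  obtain ⟨W, hW, hWfree, hWm⟩ := hbad
  have hWK : ∀ i ∈ W, ∀ j ∈ K, r i < l j := fun i hi j hj =>
    (mem_filter.mp (hW hi)).2.trans_le (hkmin j hj)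
  have hdisj : Disjoint W K := disjoint_left.mpr fun i hiW hiK =>
    (hWK i hiW i hiK).not_ge (hlr i)
  have := h (W ∪ K) (union_subset (hW.trans (filter_subset _ _)) (hK.trans (filter_subset _ _)))
    (hWfree.union hKfree fun i hi j hj => hsep i j (hWK i hi j hj))
  rw [card_union_of_disjoint hdisj] at this
  omega

end Split

section Boxes

variable {β γ : Type*}

theorem disjoint_Icc_of_fst_lt [Preorder β] [Preorder γ] {a b a' b' : β × γ}
    (h : b.1 < a'.1) : Disjoint (Set.Icc a b) (Set.Icc a' b') := by
  rw [Set.Icc_prod_eq, Set.Icc_prod_eq]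
  exact Set.disjoint_prod.mpr
    (Or.inl (Set.disjoint_left.mpr fun x hx hx' => (hx.2.trans_lt h).not_ge hx'.1))

/-- Greedy: the least right endpoint pierces every interval starting before it, and its interval
is disjoint from all the others. -/
theorem exists_pierce_Icc [LinearOrder γ] (u v : ι → γ) (huv : ∀ i, u i ≤ v i) (G : Finset ι) :
    ∃ (P : Finset γ) (D : Finset ι), D ⊆ G ∧ #P ≤ #D ∧
      (D : Set ι).PairwiseDisjoint (fun i => Set.Icc (u i) (v i)) ∧
      ∀ i ∈ G, ∃ y ∈ P, y ∈ Set.Icc (u i) (v i) := by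
  classical
  induction G using Finset.strongInduction with
  | _ G ih =>
  rcases G.eq_empty_or_nonempty with rfl | hG
  · exact ⟨∅, ∅, empty_subset _, le_rfl, by simp, by simp⟩
  obtain ⟨w, hwG, hwmin⟩ := G.exists_min_image v hG
  set G' := {i ∈ G | v w < u i}
  have hwG' : w ∉ G' := fun hw => (mem_filter.mp hw).2.not_ge (huv w)
  obtain ⟨P, D, hDG', hPD, hD, hP⟩ :=
    ih G' ((ssubset_iff_of_subset (filter_subset _ _)).mpr ⟨w, hwG, hwG'⟩)
  have hwD : w ∉ D := fun hw => hwG' (hDG' hw)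
  refine ⟨insert (v w) P, insert w D, insert_subset hwG (hDG'.trans (filter_subset _ _)), ?_,
    ?_, fun i hi => ?_⟩
  · rw [card_insert_of_notMem hwD]
    exact (card_insert_le _ _).trans (by omega)
  · rw [coe_insert]
    refine hD.insert fun j hj _ => Set.disjoint_left.mpr fun y hyw hyj => ?_
    exact (hyw.2.trans_lt (mem_filter.mp (hDG' hj)).2).not_ge hyj.1
  · by_cases hwi : v w < u i
    · obtain ⟨y, hy, hyi⟩ := hP i (mem_filter.mpr ⟨hi, hwi⟩)
      exact ⟨y, mem_insert_of_mem hy, hyi⟩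
    · exact ⟨v w, mem_insert_self _ _, not_lt.mp hwi, hwmin i hi⟩

theorem exists_pierce_Icc_of_fst_mem [Preorder β] [LinearOrder γ] (a b : ι → β × γ)
    (hab : ∀ i, a i ≤ b i) (t : β) {G : Finset ι} (hG : ∀ i ∈ G, t ∈ Set.Icc (a i).1 (b i).1) :
    ∃ (P : Finset (β × γ)) (D : Finset ι), D ⊆ G ∧ #P ≤ #D ∧
      (D : Set ι).PairwiseDisjoint (fun i => Set.Icc (a i) (b i)) ∧
      ∀ i ∈ G, ∃ x ∈ P, x ∈ Set.Icc (a i) (b i) := by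
  classical
  obtain ⟨P, D, hDG, hPD, hD, hP⟩ :=
    exists_pierce_Icc (fun i => (a i).2) (fun i => (b i).2) (fun i => (hab i).2) G
  refine ⟨P.image (t, ·), D, hDG, card_image_le.trans hPD, fun i hi j hj hij => ?_,
    fun i hi => ?_⟩
  · simp only [Function.onFun, Set.Icc_prod_eq]
    exact Set.disjoint_prod.mpr (Or.inr (hD hi hj hij))
  · obtain ⟨y, hy, hyi⟩ := hP i hi
    refine ⟨(t, y), mem_image_of_mem _ hy, ?_⟩
    rw [Set.Icc_prod_eq]
    exact ⟨hG i hi, hyi⟩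

end Boxes

/-- Recursion on `n`: `exists_split` halves the bound on both sides of a vertical line, and the
members crossing it are pierced greedily; their disjoint witnesses get the new color `n`. -/
theorem exists_layered_piercing {β γ : Type*} [LinearOrder β] [LinearOrder γ]
    (a b : ι → β × γ) (hab : ∀ i, a i ≤ b i) (hq : 1 < q) {n m : ℕ} (hm : m < 2 ^ n)
    {G : Finset ι} (hG : QFreeCardLE (fun i => Set.Icc (a i) (b i)) q m G) :
    ∃ (P : Finset (β × γ)) (D : Finset ι) (col : ι → ℕ), D ⊆ G ∧ (∀ i ∈ D, col i < n) ∧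
      IsIntersectionColoring (fun i => Set.Icc (a i) (b i)) D col ∧ #P ≤ #D ∧
      ∀ i ∈ G, ∃ x ∈ P, x ∈ Set.Icc (a i) (b i) := by
  classical
  induction n generalizing m G with
  | zero =>
    obtain rfl : m = 0 := by simpa using hm
    rw [hG.eq_empty_of_zero hq]
    exact ⟨∅, ∅, fun _ => 0, le_rfl, by simp, by simp [IsIntersectionColoring], le_rfl, by simp⟩
  | succ n ih =>
  rcases G.eq_empty_or_nonempty with rfl | hGne
  · exact ⟨∅, ∅, fun _ => 0, le_rfl, by simp, by simp [IsIntersectionColoring], le_rfl, by simp⟩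
  obtain ⟨t, hGL, hGR⟩ := hG.exists_split hGne (fun i => (a i).1) (fun i => (b i).1)
    (fun i => (hab i).1) fun i j hij => disjoint_Icc_of_fst_lt hij
  have hm2 : m / 2 < 2 ^ n := by rw [pow_succ] at hm; omega
  obtain ⟨PL, DL, colL, hDL, hcolL, hL, hPL, hpierceL⟩ := ih hm2 hGL
  obtain ⟨PR, DR, colR, hDR, hcolR, hR, hPR, hpierceR⟩ := ih hm2 hGR
  obtain ⟨P₀, D₀, hD₀, hP₀, h₀, hpierce₀⟩ := exists_pierce_Icc_of_fst_mem a b hab t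
    (G := {i ∈ G | t ∈ Set.Icc (a i).1 (b i).1}) fun i hi => (mem_filter.mp hi).2
  have hLR : ∀ i ∈ DL, ∀ j ∈ DR, (b i).1 < (a j).1 := fun i hi j hj =>
    (mem_filter.mp (hDL hi)).2.trans (mem_filter.mp (hDR hj)).2
  have hdisjLR : Disjoint DL DR :=
    disjoint_left.mpr fun i hiL hiR => (hLR i hiL i hiR).not_ge (hab i).1
  have hdisj₀ : Disjoint D₀ (DL ∪ DR) := by
    refine disjoint_left.mpr fun i hi₀ hi => ?_
    have hti := (mem_filter.mp (hD₀ hi₀)).2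
    rcases mem_union.mp hi with hi | hi
    · exact (mem_filter.mp (hDL hi)).2.not_ge hti.2
    · exact (mem_filter.mp (hDR hi)).2.not_ge hti.1
  have hLR' := hL.union hR fun i hi j hj => disjoint_Icc_of_fst_lt (hLR i hi j hj)
  have hcolLR : ∀ i ∈ DL ∪ DR, (if i ∈ DL then colL i else colR i) < n := by
    intro i hi
    split_ifs with hiL
    · exact hcolL i hiL
    · exact hcolR i ((mem_union.mp hi).resolve_left hiL)
  refine ⟨P₀ ∪ (PL ∪ PR), D₀ ∪ (DL ∪ DR), _,
    union_subset (hD₀.trans (filter_subset _ _))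
      (union_subset (hDL.trans (filter_subset _ _)) (hDR.trans (filter_subset _ _))),
    fun i hi => ?_, hLR'.union_of_pairwiseDisjoint h₀ hdisj₀ fun i hi => (hcolLR i hi).ne, ?_,
    fun i hi => ?_⟩
  · by_cases hi₀ : i ∈ D₀
    · simp only [hi₀, if_true, n.lt_succ_self]
    · simp only [hi₀, if_false]
      exact (hcolLR i ((mem_union.mp hi).resolve_left hi₀)).trans n.lt_succ_self
  · calc #(P₀ ∪ (PL ∪ PR)) ≤ #P₀ + (#PL + #PR) :=
          (card_union_le _ _).trans (Nat.add_le_add_left (card_union_le _ _) _)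
      _ ≤ #D₀ + (#DL + #DR) := by omega
      _ = #(D₀ ∪ (DL ∪ DR)) := by
          rw [card_union_of_disjoint hdisj₀, card_union_of_disjoint hdisjLR]
  · by_cases hiL : (b i).1 < t
    · obtain ⟨x, hx, hxi⟩ := hpierceL i (mem_filter.mpr ⟨hi, hiL⟩)
      exact ⟨x, mem_union_right _ (mem_union_left _ hx), hxi⟩
    by_cases hiR : t < (a i).1
    · obtain ⟨x, hx, hxi⟩ := hpierceR i (mem_filter.mpr ⟨hi, hiR⟩)
      exact ⟨x, mem_union_right _ (mem_union_right _ hx), hxi⟩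
    obtain ⟨x, hx, hxi⟩ :=
      hpierce₀ i (mem_filter.mpr ⟨hi, not_lt.mp hiR, not_lt.mp hiL⟩)
    exact ⟨x, mem_union_left _ hx, hxi⟩

/-- Lemma 2.5 (weak `(p,q)`-theorem for rectangles): for every `c > 0` and all
`p ≥ q ≥ 2` with `q ≥ c·log₂ p`, any family of axis-parallel rectangles in the
plane with the `(p,q)`-property can be pierced by `p - q + 1 + 2p/c` points. -/
theorem rect_weak_pq {ι : Type} [Fintype ι] (F : ι → Set (ℝ × ℝ))
    (hrect : ∀ i, IsRect (F i))
    (c : ℝ) (hc : 0 < c)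
    (p q : ℕ) (hq2 : 2 ≤ q) (hqp : q ≤ p)
    (hlog : c * Real.logb 2 (p : ℝ) ≤ (q : ℝ))
    (hpq : HasPQ F p q) :
    ∃ P : Finset (ℝ × ℝ),
      (P.card : ℝ) ≤ (p : ℝ) - (q : ℝ) + 1 + 2 * (p : ℝ) / c ∧ Pierces F P := by
  classical
  choose a b hab hF using hrect
  obtain rfl : F = fun i => Set.Icc (a i) (b i) := funext hF
  have hp : p - 1 < 2 ^ (Nat.log 2 p + 1) :=
    (Nat.sub_le p 1).trans_lt (Nat.lt_pow_succ_log_self one_lt_two p)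
  obtain ⟨P, D, col, -, hcol, hD, hPD, hP⟩ :=
    exists_layered_piercing a b hab hq2 hp hpq.qFreeCardLE
  have hlogp : c * Nat.log 2 p ≤ q := by
    have := Real.natLog_le_logb p 2
    push_cast at this
    exact (mul_le_mul_of_nonneg_left this hc.le).trans hlog
  refine ⟨P, ?_, fun i => hP i (mem_univ i)⟩
  calc (#P : ℝ) ≤ #D := by exact_mod_cast hPD
    _ ≤ p - q + 1 + 2 * p * Nat.log 2 p / q :=
      hpq.card_le_of_color_le hq2 hqp col hD fun i hi => Nat.lt_succ_iff.mp (hcol i hi)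
    _ ≤ p - q + 1 + 2 * p / c := by
      gcongr _ + ?_
      rw [div_le_div_iff₀ (by positivity) hc]
      nlinarith
end

section
/- Let G = (G_i)_{i∈I} be a finite indexed family of m nonempty sets (in an arbitrary ambient type) satisfying the (p,2)-property, where 2 ≤ p ≤ m. Then G can be pierced by at most ⌊(m + p − 1)/2⌋ points. -/
/-- Lemma 2.6: any family of `m` nonempty sets satisfying the `(p,2)`-property
can be pierced by `⌊(m + p - 1)/2⌋` points. -/
theorem p2_pierce_half {ι α : Type} [Fintype ι] (F : ι → Set α)
    (hne : ∀ i, (F i).Nonempty)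
    (m p : ℕ) (hm : Fintype.card ι = m)
    (hp2 : 2 ≤ p) (hpm : p ≤ m)
    (hpq : HasPQ F p 2) :
    ∃ P : Finset α, P.card ≤ (m + p - 1) / 2 ∧ Pierces F P := by
  classical
  obtain ⟨hpc, hprop⟩ := hpq
  have key : ∀ n (S : Finset ι), S.card = n →
      ∃ P : Finset α, P.card ≤ (S.card + p - 1) / 2 ∧ ∀ i ∈ S, ∃ x ∈ P, x ∈ F i := by
    intro n
    induction n using Nat.strong_induction_on with
    | _ n ih =>
      intro S hS
      by_cases h : p ≤ S.card
      · obtain ⟨J, hJS, hJ⟩ := Finset.exists_subset_card_eq h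
        obtain ⟨K, hKJ, hK2, x, hx⟩ := hprop J hJ
        have hKS : K ⊆ S := hKJ.trans hJS
        have hcard : (S \ K).card = n - 2 := by
          rw [Finset.card_sdiff_of_subset hKS, hK2, hS]
        have hn2 : 2 ≤ n := by omega
        obtain ⟨P', hP'card, hP'⟩ := ih (n - 2) (by omega) (S \ K) hcard
        refine ⟨insert x P', ?_, ?_⟩
        · have hins := Finset.card_insert_le x P'
          rw [hcard] at hP'card
          rw [hS]
          omega
        · intro i hi
          by_cases hiK : i ∈ K
          · exact ⟨x, Finset.mem_insert_self x P',
              by simpa using Set.mem_iInter₂.mp hx i hiK⟩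
          · obtain ⟨y, hy, hyF⟩ := hP' i (Finset.mem_sdiff.mpr ⟨hi, hiK⟩)
            exact ⟨y, Finset.mem_insert_of_mem hy, hyF⟩
      · choose f hf using hne
        refine ⟨S.image f, ?_, fun i hi => ⟨f i, Finset.mem_image_of_mem f hi, hf i⟩⟩
        have hle := Finset.card_image_le (f := f) (s := S)
        omega
  obtain ⟨P, hPcard, hP⟩ := key (Fintype.card ι) Finset.univ (by simp)
  refine ⟨P, ?_, fun i => hP i (Finset.mem_univ i)⟩
  simpa [hm] using hPcard
end

section
/- For all integers m ≥ p ≥ 2 there exists a finite indexed family of m nonempty convex sets in the plane ℝ² (consisting of m − p + 2 lines in general position together with p − 2 pairwise-disjoint segments disjoint from all the lines) that satisfies the (p,2)-property but cannot be pierced by fewer than ⌊(m + p − 1)/2⌋ points. -/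
noncomputable def lineSet (c : ℝ) : Set (ℝ × ℝ) :=
  {x | ∃ t : ℝ, x = ((0:ℝ), c^2) + t • ((1:ℝ), c)}

lemma lineSet_mem (c : ℝ) (x : ℝ × ℝ) : x ∈ lineSet c ↔ x.2 = c * x.1 + c^2 := by
  constructor
  · rintro ⟨t, rfl⟩
    simp [Prod.smul_def]
    ring
  · intro h
    exact ⟨x.1, by ext <;> simp [h] <;> ring⟩

lemma convex_lineSet' (a v : ℝ × ℝ) : Convex ℝ {x | ∃ t : ℝ, x = a + t • v} := by
  rintro x ⟨t, rfl⟩ y ⟨s, rfl⟩ u w hu hw huw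
  refine ⟨u * t + w * s, ?_⟩
  rw [smul_add, smul_add, smul_smul, smul_smul, add_smul]
  have : u • a + w • a = a := by rw [← add_smul, huw, one_smul]
  rw [add_add_add_comm, this]

lemma convex_lineSet (c : ℝ) : Convex ℝ (lineSet c) := convex_lineSet' _ _

lemma segMem' (c d : ℝ) (hcd : c ≤ d) (x : ℝ × ℝ)
    (hx : x ∈ segment ℝ ((0:ℝ), c) ((0:ℝ), d)) : x.1 = 0 ∧ c ≤ x.2 ∧ x.2 ≤ d := by
  obtain ⟨u, v, hu, hv, huv, rfl⟩ := hx
  refine ⟨by simp, ?_, ?_⟩ <;> simp only [Prod.smul_def, Prod.mk_add_mk, Prod.snd_add,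
    Prod.smul_snd, smul_eq_mul]
  · have h1 : u * c + v * d = c + v * (d - c) := by linear_combination c * huv
    have := mul_nonneg hv (sub_nonneg.mpr hcd)
    linarith
  · have h1 : u * c + v * d = d - u * (d - c) := by linear_combination d * huv
    have := mul_nonneg hu (sub_nonneg.mpr hcd)
    linarith

lemma lineX {a b : ℝ} (hab : a ≠ b) {x : ℝ × ℝ} (h1 : x ∈ lineSet a) (h2 : x ∈ lineSet b) :
    x.1 = -(a + b) := by
  rw [lineSet_mem] at h1 h2
  have h3 : (a - b) * (x.1 + (a + b)) = 0 := by linear_combination h2 - h1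
  rcases mul_eq_zero.mp h3 with h | h
  · exact absurd (sub_eq_zero.mp h) hab
  · linarith

lemma lineInt (a b : ℝ) (hab : a ≠ b) :
    ∃! x : ℝ × ℝ, x ∈ lineSet a ∩ lineSet b := by
  refine ⟨(-(a+b), -(a*b)), ⟨?_, ?_⟩, ?_⟩
  · rw [lineSet_mem]; ring
  · rw [lineSet_mem]; ring
  · rintro x ⟨h1, h2⟩
    have h4 := lineX hab h1 h2
    rw [lineSet_mem] at h1
    have h5 : x.2 = -(a*b) := by rw [h1, h4]; ring
    exact Prod.ext h4 h5

/-- Remark 2.7 (tightness of Lemma 2.6): for all `m ≥ p ≥ 2` there is a family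
of `m` nonempty convex sets in the plane — `m - p + 2` lines in general
position (no two parallel: every two meet in exactly one point; and no three
concurrent) together with `p - 2` pairwise-disjoint segments disjoint from all
the lines — which satisfies the `(p,2)`-property but cannot be pierced by
fewer than `⌊(m + p - 1)/2⌋` points. -/
theorem p2_pierce_half_tight (m p : ℕ) (hp : 2 ≤ p) (hpm : p ≤ m) :
    ∃ (F : Fin m → Set (ℝ × ℝ)) (L : Finset (Fin m)),
      (∀ i, (F i).Nonempty) ∧
      (∀ i, Convex ℝ (F i)) ∧
      L.card = m - p + 2 ∧
      -- members indexed by `L` are lines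
      (∀ i ∈ L, ∃ a v : ℝ × ℝ, v ≠ 0 ∧ F i = {x | ∃ t : ℝ, x = a + t • v}) ∧
      -- general position: no two parallel (each two meet in exactly one point)
      (∀ i ∈ L, ∀ j ∈ L, i ≠ j → ∃! x, x ∈ F i ∩ F j) ∧
      -- general position: no three lines through a common point
      (∀ i ∈ L, ∀ j ∈ L, ∀ k ∈ L, i ≠ j → i ≠ k → j ≠ k →
        F i ∩ F j ∩ F k = ∅) ∧
      -- members outside `L` are segments
      (∀ i ∉ L, ∃ a b : ℝ × ℝ, a ≠ b ∧ F i = segment ℝ a b) ∧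
      -- the segments are pairwise disjoint and disjoint from all the lines
      (∀ i ∉ L, ∀ j, j ≠ i → Disjoint (F i) (F j)) ∧
      HasPQ F p 2 ∧
      ∀ P : Finset (ℝ × ℝ), Pierces F P → (m + p - 1) / 2 ≤ P.card := by
  classical
  set n := m - p + 2 with hn
  have hnm : n ≤ m := by omega
  have hn2 : 2 ≤ n := by omega
  set F : Fin m → Set (ℝ × ℝ) := fun i =>
    if (i : ℕ) < n then lineSet (((i : ℕ) : ℝ) + 1)
    else segment ℝ ((0:ℝ), ((((i:ℕ) - n : ℕ) : ℝ) + 1/4)) ((0:ℝ), ((((i:ℕ) - n : ℕ) : ℝ) + 1/2))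
    with hF
  set L : Finset (Fin m) := Finset.univ.filter (fun i : Fin m => (i:ℕ) < n) with hL
  have hmemL : ∀ i : Fin m, i ∈ L ↔ (i:ℕ) < n := by
    intro i; simp [hL]
  have hFline : ∀ i : Fin m, (i:ℕ) < n → F i = lineSet (((i:ℕ):ℝ) + 1) := by
    intro i h; simp only [hF, if_pos h]
  have hFseg : ∀ i : Fin m, ¬ (i:ℕ) < n →
      F i = segment ℝ ((0:ℝ), ((((i:ℕ) - n : ℕ) : ℝ) + 1/4))
        ((0:ℝ), ((((i:ℕ) - n : ℕ) : ℝ) + 1/2)) := by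
    intro i h; simp only [hF, if_neg h]
  -- card of L
  have himg : L.image Fin.val = Finset.range n := by
    ext a
    simp only [Finset.mem_image, Finset.mem_range, hL, Finset.mem_filter, Finset.mem_univ,
      true_and]
    constructor
    · rintro ⟨i, h1, rfl⟩; exact h1
    · intro ha; exact ⟨⟨a, lt_of_lt_of_le ha hnm⟩, ha, rfl⟩
  have hLcard : L.card = n := by
    rw [← Finset.card_image_of_injective L Fin.val_injective, himg, Finset.card_range]
  have hLc : Lᶜ.card = m - n := by
    rw [Finset.card_compl, hLcard, Fintype.card_fin]
  -- slopes distinct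
  have hslope : ∀ i j : Fin m, i ≠ j → (((i:ℕ):ℝ) + 1) ≠ (((j:ℕ):ℝ) + 1) := by
    intro i j hij h
    have h1 : ((i:ℕ):ℝ) = ((j:ℕ):ℝ) := by linarith
    exact hij (Fin.ext (by exact_mod_cast h1))
  -- three lines have empty intersection
  have h3lines : ∀ i ∈ L, ∀ j ∈ L, ∀ k ∈ L, i ≠ j → i ≠ k → j ≠ k →
      F i ∩ F j ∩ F k = ∅ := by
    intro i hi j hj k hk hij hik hjk
    rw [Set.eq_empty_iff_forall_notMem]
    rintro x ⟨⟨h1, h2⟩, h3⟩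
    rw [hFline i ((hmemL i).mp hi)] at h1
    rw [hFline j ((hmemL j).mp hj)] at h2
    rw [hFline k ((hmemL k).mp hk)] at h3
    have e1 := lineX (hslope i j hij) h1 h2
    have e2 := lineX (hslope i k hik) h1 h3
    have : (((j:ℕ):ℝ) + 1) = (((k:ℕ):ℝ) + 1) := by linarith
    exact hslope j k hjk this
  -- intersection point of two lines in L
  have hint : ∀ i ∈ L, ∀ j ∈ L, i ≠ j → ∃ x, x ∈ F i ∧ x ∈ F j := by
    intro i hi j hj hij
    obtain ⟨x, hx, -⟩ := lineInt _ _ (hslope i j hij)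
    rw [← hFline i ((hmemL i).mp hi), ← hFline j ((hmemL j).mp hj)] at hx
    exact ⟨x, hx.1, hx.2⟩
  -- pairwise disjointness from segments
  have hdisj : ∀ i ∉ L, ∀ j, j ≠ i → Disjoint (F i) (F j) := by
    intro i hi j hij
    rw [Set.disjoint_left]
    intro x hxi hxj
    rw [hmemL] at hi
    push_neg at hi
    rw [hFseg i (by omega)] at hxi
    obtain ⟨hx1, hx2, hx3⟩ := segMem' _ _ (by norm_num) x hxi
    by_cases hjn : (j:ℕ) < n
    · rw [hFline j hjn, lineSet_mem, hx1, mul_zero, zero_add] at hxj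
      have hcast : (((j:ℕ):ℝ) + 1)^2 = ((((j:ℕ) + 1)^2 : ℕ) : ℝ) := by push_cast; ring
      rw [hxj, hcast] at hx2 hx3
      have h1 : ((((i:ℕ) - n : ℕ)) : ℝ) < ((((j:ℕ) + 1)^2 : ℕ) : ℝ) := by linarith
      have h2 : ((i:ℕ) - n : ℕ) < ((j:ℕ) + 1)^2 := by exact_mod_cast h1
      have h3 : ((((i:ℕ) - n : ℕ)) : ℝ) + 1 ≤ ((((j:ℕ) + 1)^2 : ℕ) : ℝ) := by
        exact_mod_cast h2
      linarith
    · rw [hFseg j hjn] at hxj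
      obtain ⟨hy1, hy2, hy3⟩ := segMem' _ _ (by norm_num) x hxj
      push_neg at hjn
      have hne : (i:ℕ) - n ≠ (j:ℕ) - n := by
        have : (i:ℕ) ≠ (j:ℕ) := fun h => hij (Fin.ext h.symm)
        omega
      rcases Nat.lt_or_ge ((i:ℕ) - n) ((j:ℕ) - n) with h | h
      · have h1 : (i:ℕ) - n + 1 ≤ (j:ℕ) - n := h
        have h2 : ((((i:ℕ) - n : ℕ)) : ℝ) + 1 ≤ ((((j:ℕ) - n : ℕ)) : ℝ) := by
          exact_mod_cast h1
        linarith
      · have h1 : (j:ℕ) - n + 1 ≤ (i:ℕ) - n := by omega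
        have h2 : ((((j:ℕ) - n : ℕ)) : ℝ) + 1 ≤ ((((i:ℕ) - n : ℕ)) : ℝ) := by
          exact_mod_cast h1
        linarith
  refine ⟨F, L, ?_, ?_, hLcard, ?_, ?_, h3lines, ?_, hdisj, ⟨?_, ?_⟩, ?_⟩
  · -- nonempty
    intro i
    by_cases h : (i:ℕ) < n
    · exact ⟨((0:ℝ), (((i:ℕ):ℝ) + 1)^2), by rw [hFline i h, lineSet_mem]; simp⟩
    · rw [hFseg i h]
      exact ⟨_, left_mem_segment ℝ _ _⟩
  · -- convex
    intro i
    by_cases h : (i:ℕ) < n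
    · rw [hFline i h]; exact convex_lineSet _
    · rw [hFseg i h]; exact convex_segment _ _
  · -- lines
    intro i hi
    refine ⟨((0:ℝ), (((i:ℕ):ℝ) + 1)^2), ((1:ℝ), ((i:ℕ):ℝ) + 1), ?_, ?_⟩
    · intro h
      have := congrArg Prod.fst h
      norm_num at this
    · rw [hFline i ((hmemL i).mp hi)]; rfl
  · -- unique intersection
    intro i hi j hj hij
    rw [hFline i ((hmemL i).mp hi), hFline j ((hmemL j).mp hj)]
    exact lineInt _ _ (hslope i j hij)
  · -- segments
    intro i hi
    rw [hmemL] at hi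
    refine ⟨_, _, ?_, hFseg i hi⟩
    intro h
    have := congrArg Prod.snd h
    norm_num at this
  · -- p ≤ card
    rw [Fintype.card_fin]; exact hpm
  · -- (p,2)
    intro J hJ
    have hsub : J \ L ⊆ Lᶜ := by
      intro x hx
      rw [Finset.mem_compl]
      exact (Finset.mem_sdiff.mp hx).2
    have h1 : (J \ L).card ≤ m - n := hLc ▸ Finset.card_le_card hsub
    have h2 := Finset.card_inter_add_card_sdiff J L
    have h3 : 1 < (J ∩ L).card := by omega
    obtain ⟨i, hi, j, hj, hij⟩ := Finset.one_lt_card.mp h3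
    obtain ⟨x, hxi, hxj⟩ := hint i (Finset.mem_inter.mp hi).2 j (Finset.mem_inter.mp hj).2 hij
    refine ⟨{i, j}, ?_, Finset.card_pair hij, ⟨x, ?_⟩⟩
    · intro k hk
      rcases Finset.mem_insert.mp hk with rfl | hk
      · exact (Finset.mem_inter.mp hi).1
      · rw [Finset.mem_singleton] at hk
        exact hk ▸ (Finset.mem_inter.mp hj).1
    · simp only [Set.mem_iInter]
      intro k hk
      rcases Finset.mem_insert.mp hk with rfl | hk
      · exact hxi
      · rw [Finset.mem_singleton] at hk
        exact hk ▸ hxj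
  · -- piercing lower bound
    intro P hP
    choose g hgP hgF using hP
    set Pl := L.image g with hPl
    set Ps := Lᶜ.image g with hPs
    have hPlP : Pl ⊆ P := Finset.image_subset_iff.mpr fun i _ => hgP i
    have hPsP : Ps ⊆ P := Finset.image_subset_iff.mpr fun i _ => hgP i
    have hPscard : Ps.card = m - n := by
      rw [hPs, Finset.card_image_of_injOn, hLc]
      intro i hi j hj hgij
      by_contra hne
      have hd := hdisj i (Finset.mem_compl.mp hi) j (fun h => hne h.symm)
      exact Set.disjoint_left.mp hd (hgF i) (hgij ▸ hgF j)
    have hPlcard : n ≤ 2 * Pl.card := by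
      have hfib : ∀ a ∈ L.image g, (L.filter fun x => g x = a).card ≤ 2 := by
        intro a _
        by_contra hgt
        push_neg at hgt
        obtain ⟨i, hi, j, hj, k, hk, hij, hik, hjk⟩ := Finset.two_lt_card.mp hgt
        rw [Finset.mem_filter] at hi hj hk
        have hempty := h3lines i hi.1 j hj.1 k hk.1 hij hik hjk
        have : a ∈ F i ∩ F j ∩ F k :=
          ⟨⟨hi.2 ▸ hgF i, hj.2 ▸ hgF j⟩, hk.2 ▸ hgF k⟩
        rw [hempty] at this
        exact this
      have h2 := Finset.card_le_mul_card_image L 2 hfib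
      rw [hLcard, ← hPl] at h2
      omega
    have hdd : Disjoint Pl Ps := by
      rw [Finset.disjoint_left]
      rintro x hxl hxs
      obtain ⟨i, hi, rfl⟩ := Finset.mem_image.mp hxl
      obtain ⟨j, hj, hji⟩ := Finset.mem_image.mp hxs
      have hjL := Finset.mem_compl.mp hj
      have hne : i ≠ j := fun h => hjL (h ▸ hi)
      exact Set.disjoint_left.mp (hdisj j hjL i hne) (hji ▸ hgF j) (hgF i)
    have hu := Finset.card_union_of_disjoint hdd
    have hle := Finset.card_le_card (Finset.union_subset hPlP hPsP)
    omega
end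

section
/- Let F = (F_i)_{i∈I} be a finite indexed family of nonempty sets in ℝ^d, let c > 0, and let f : [2,∞) → [1,∞) be monotone increasing. Assume that for every integer p ≥ 2, every subfamily of F satisfying the (p,2)-property can be pierced by a finite set of at most p·f(p) points. Then for all integers p ≥ q ≥ 2 with q ≥ T_c(p), if F satisfies the (p,q)-property then F can be pierced by a finite set of at most p − q + 1 + p/c points. -/
/-- A "block": a set of `m` indices whose sets are pairwise disjoint. -/
def GoodBlock {ι α : Type*} (F : ι → Set α) (m : ℕ) (B : Finset ι) : Prop :=
  B.card = m ∧ ∀ a ∈ B, ∀ b ∈ B, a ≠ b → Disjoint (F a) (F b)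

/-- Greedy extraction of a maximal packing of blocks. -/
lemma exists_packing {ι α : Type*} [DecidableEq ι] (F : ι → Set α) (m : ℕ) (hm : 0 < m) :
    ∀ (n : ℕ) (A : Finset ι), A.card ≤ n → ∃ C : Finset (Finset ι),
      (∀ B ∈ C, GoodBlock F m B) ∧ (∀ B ∈ C, B ⊆ A) ∧
      (∀ B₁ ∈ C, ∀ B₂ ∈ C, B₁ ≠ B₂ → Disjoint B₁ B₂) ∧
      ∀ B ⊆ A \ C.biUnion id, ¬ GoodBlock F m B := by
  intro n
  induction n with
  | zero =>
    intro A hA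
    refine ⟨∅, by simp, by simp, by simp, ?_⟩
    intro B hB hgood
    have hBA : B ⊆ A := by simpa using hB
    have h1 : B.card ≤ 0 := le_trans (Finset.card_le_card hBA) hA
    have h2 : B.card = m := hgood.1
    omega
  | succ n ih =>
    intro A hA
    by_cases h : ∃ B, B ⊆ A ∧ GoodBlock F m B
    · obtain ⟨B, hBA, hgood⟩ := h
      have hB1 : 1 ≤ B.card := by have := hgood.1; omega
      have hcard : (A \ B).card ≤ n := by
        have h1 := Finset.card_sdiff_of_subset hBA
        have h2 := Finset.card_le_card hBA
        omega
      obtain ⟨C', h1, h2, h3, h4⟩ := ih (A \ B) hcard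
      have hdisjB : ∀ B' ∈ C', Disjoint B B' := by
        intro B' hB'
        rw [Finset.disjoint_left]
        intro x hxB hxB'
        have := h2 B' hB' hxB'
        simp only [Finset.mem_sdiff] at this
        exact this.2 hxB
      refine ⟨insert B C', ?_, ?_, ?_, ?_⟩
      · intro B' hB'
        rcases Finset.mem_insert.mp hB' with rfl | hB'
        · exact hgood
        · exact h1 _ hB'
      · intro B' hB'
        rcases Finset.mem_insert.mp hB' with rfl | hB'
        · exact hBA
        · exact (h2 _ hB').trans (Finset.sdiff_subset)
      · intro B₁ hB₁ B₂ hB₂ hne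
        rcases Finset.mem_insert.mp hB₁ with h₁ | h₁ <;>
          rcases Finset.mem_insert.mp hB₂ with h₂ | h₂
        · exact absurd (h₁.trans h₂.symm) hne
        · subst h₁; exact hdisjB _ h₂
        · subst h₂; exact (hdisjB _ h₁).symm
        · exact h3 _ h₁ _ h₂ hne
      · intro B'' hB''
        have heq : A \ (insert B C').biUnion id = (A \ B) \ C'.biUnion id := by
          rw [Finset.biUnion_insert]
          ext x
          simp only [Finset.mem_sdiff, Finset.mem_union, id]
          tauto
        exact h4 B'' (heq ▸ hB'')
    · push_neg at h
      refine ⟨∅, by simp, by simp, by simp, ?_⟩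
      intro B hB
      exact h B (by simpa using hB)

/-- One piercing point inside each nonempty set. -/
lemma exists_singles {ι α : Type*} [DecidableEq α] (F : ι → Set α)
    (hne : ∀ i, (F i).Nonempty) (A : Finset ι) :
    ∃ P : Finset α, P.card ≤ A.card ∧ ∀ i ∈ A, ∃ x ∈ P, x ∈ F i := by
  refine ⟨A.image (fun i => (hne i).some), Finset.card_image_le, ?_⟩
  intro i hi
  exact ⟨(hne i).some, Finset.mem_image_of_mem _ hi, (hne i).some_mem⟩

set_option maxHeartbeats 1600000 in
/-- Lemma A.1 (weak `(p,q)`-theorem): let `F` be a family of nonempty sets in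
`ℝ^d` such that every subfamily with the `(p,2)`-property can be pierced by
`p·f(p)` points, where `f : [2,∞) → [1,∞)` is monotone increasing. Then for all
`p ≥ q ≥ 2` with `q ≥ T_c(p)` (i.e. some integer `2 ≤ q₀ ≤ min(p,q)` satisfies
`q₀ ≥ 2c·f(2p/q₀)`), the family can be pierced by `p - q + 1 + p/c` points. -/
theorem weak_pq_from_p2 (d : ℕ) {ι : Type} [Fintype ι]
    (F : ι → Set (Fin d → ℝ))
    (hne : ∀ i, (F i).Nonempty)
    (c : ℝ) (hc : 0 < c)
    (f : ℝ → ℝ)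
    (hrange : ∀ x : ℝ, 2 ≤ x → 1 ≤ f x)
    (hmono : ∀ x y : ℝ, 2 ≤ x → x ≤ y → f x ≤ f y)
    (hp2 : ∀ p : ℕ, 2 ≤ p → ∀ S : Finset ι, HasPQOn F S p 2 →
      ∃ P : Finset (Fin d → ℝ), (P.card : ℝ) ≤ (p : ℝ) * f p ∧
        ∀ i ∈ S, ∃ x ∈ P, x ∈ F i)
    (p q : ℕ) (hq2 : 2 ≤ q) (hqp : q ≤ p)
    (hT : ∃ q₀ : ℕ, 2 ≤ q₀ ∧ (q₀ : ℝ) ≤ (p : ℝ) ∧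
      2 * c * f (2 * (p : ℝ) / (q₀ : ℝ)) ≤ (q₀ : ℝ) ∧ q₀ ≤ q)
    (hpq : HasPQ F p q) :
    ∃ P : Finset (Fin d → ℝ),
      (P.card : ℝ) ≤ (p : ℝ) - (q : ℝ) + 1 + (p : ℝ) / c ∧ Pierces F P := by
  classical
  obtain ⟨hcard, hprop⟩ := hpq
  obtain ⟨q₀, hq₀2, hq₀pR, hq₀f, hq₀q⟩ := hT
  have hq₀p : q₀ ≤ p := by exact_mod_cast hq₀pR
  have hq2p : 2 ≤ p := le_trans hq2 hqp
  have hq₀pos : 0 < q₀ := by omega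
  have hqpR : (q:ℝ) ≤ (p:ℝ) := by exact_mod_cast hqp
  by_cases hq₀le2 : q₀ ≤ 2
  · -- q₀ = 2 : the whole family satisfies the (p,2)-property and f(p) ≤ 1/c.
    have hq₀eq : q₀ = 2 := le_antisymm hq₀le2 hq₀2
    have harg : 2 * (p:ℝ) / (q₀:ℝ) = (p:ℝ) := by
      rw [hq₀eq]; push_cast; ring
    have hfp : 2 * c * f (p:ℝ) ≤ 2 := by
      have := hq₀f
      rw [harg, hq₀eq] at this
      exact_mod_cast this
    have hHas : HasPQOn F Finset.univ p 2 := by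
      constructor
      · simpa [Finset.card_univ] using hcard
      · intro J _ hJcard
        obtain ⟨K, hKJ, hKcard, hKne⟩ := hprop J hJcard
        obtain ⟨K', hK'K, hK'card⟩ := Finset.exists_subset_card_eq (s := K) (n := 2) (by omega)
        refine ⟨K', hK'K.trans hKJ, hK'card, ?_⟩
        obtain ⟨y, hy⟩ := hKne
        refine ⟨y, ?_⟩
        simp only [Set.mem_iInter] at hy ⊢
        exact fun k hk => hy k (hK'K hk)
    obtain ⟨P, hPcard, hPp⟩ := hp2 p hq2p Finset.univ hHas
    refine ⟨P, ?_, fun i => hPp i (Finset.mem_univ i)⟩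
    have hf1c : f (p:ℝ) * c ≤ 1 := by linarith
    have hp0 : (0:ℝ) ≤ (p:ℝ) := by positivity
    have hpf : (p:ℝ) * f p ≤ (p:ℝ) / c := by
      rw [le_div_iff₀ hc]
      have := mul_le_mul_of_nonneg_left hf1c hp0
      nlinarith [this]
    linarith
  · -- main case : q₀ ≥ 3
    have hq₀3 : 3 ≤ q₀ := by omega
    set m : ℕ := 2 * p / q₀ with hm_def
    have hm2 : 2 ≤ m := by
      rw [hm_def, Nat.le_div_iff_mul_le hq₀pos]; omega
    have hmod := Nat.div_add_mod (2 * p) q₀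
    have hmodlt := Nat.mod_lt (2 * p) hq₀pos
    have heq2p : q₀ * m + 2 * p % q₀ = 2 * p := by rw [hm_def]; exact hmod
    have hmul : q₀ * m ≤ 2 * p := by omega
    have hlt : 2 * p < q₀ * m + q₀ := by omega
    -- arithmetic claim: p ≤ m * (q - 1)
    have hP2' : p ≤ m * (q - 1) := by
      obtain ⟨k, hk⟩ : ∃ k, q = k + 1 := ⟨q - 1, by omega⟩
      have hk2 : 2 ≤ k := by omega
      have h1 : q₀ * m ≤ (k + 1) * m := Nat.mul_le_mul_right m (by omega)
      have h2 : m + k ≤ m * k := Nat.add_le_mul hm2 hk2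
      have h3 : 2 * p < (k + 1) * m + (k + 1) := by
        have h5 : q₀ ≤ k + 1 := by omega
        calc 2 * p < q₀ * m + q₀ := hlt
          _ ≤ (k + 1) * m + (k + 1) := Nat.add_le_add h1 h5
      have h6 : (k + 1) * m + (k + 1) = m * k + (m + k) + 1 := by ring
      rw [h6] at h3
      have h7 : 2 * p < m * k + m * k + 1 := by omega
      have h8 : p ≤ m * k := by omega
      have h9 : q - 1 = k := by omega
      rw [h9]; exact h8
    -- maximal packing of m-blocks
    obtain ⟨C, hCgood, hCsub, hCdisj, hCmax⟩ :=
      exists_packing F m (by omega) (Fintype.card ι) Finset.univ (le_of_eq Finset.card_univ)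
    set U : Finset ι := C.biUnion id with hU_def
    have hUcard : U.card = m * C.card := by
      rw [hU_def, show C.biUnion id = C.biUnion (fun x => x) from rfl,
        Finset.card_biUnion (fun x hx y hy hxy => hCdisj x hx y hy hxy),
        Finset.sum_congr rfl (fun B hB => (hCgood B hB).1), Finset.sum_const, smul_eq_mul,
        Nat.mul_comm]
    -- Pillar 2: the total mass of the packing is < p
    have hP2 : m * C.card < p := by
      by_contra hcon
      push_neg at hcon
      have hC' : ∃ C' ⊆ C, C'.card ≤ q - 1 ∧ p ≤ m * C'.card := by
        by_cases hτ : C.card ≤ q - 1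
        · exact ⟨C, le_refl _, hτ, hcon⟩
        · obtain ⟨C', hC'C, hC'card⟩ :=
            Finset.exists_subset_card_eq (s := C) (n := q - 1) (by omega)
          exact ⟨C', hC'C, le_of_eq hC'card, by rw [hC'card]; exact hP2'⟩
      obtain ⟨C', hC'C, hC'le, hC'mass⟩ := hC'
      have hU'card : (C'.biUnion id).card = m * C'.card := by
        rw [show C'.biUnion id = C'.biUnion (fun x => x) from rfl,
          Finset.card_biUnion (fun x hx y hy hxy => hCdisj x (hC'C hx) y (hC'C hy) hxy),
          Finset.sum_congr rfl (fun B hB => (hCgood B (hC'C hB)).1), Finset.sum_const,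
          smul_eq_mul, Nat.mul_comm]
      obtain ⟨J, hJU', hJcard⟩ :=
        Finset.exists_subset_card_eq (s := C'.biUnion id) (n := p) (by omega)
      obtain ⟨K, hKJ, hKcard, ⟨y, hy⟩⟩ := hprop J hJcard
      have hyK : ∀ k ∈ K, y ∈ F k := by
        intro k hk
        simp only [Set.mem_iInter] at hy
        exact hy k hk
      have hsub : K ⊆ C'.biUnion (fun B => K ∩ B) := by
        intro x hx
        have hxU' : x ∈ C'.biUnion id := hJU' (hKJ hx)
        rw [Finset.mem_biUnion] at hxU'
        obtain ⟨B, hB, hxB⟩ := hxU'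
        rw [Finset.mem_biUnion]
        exact ⟨B, hB, Finset.mem_inter.mpr ⟨hx, hxB⟩⟩
      have hone : ∀ B ∈ C', (K ∩ B).card ≤ 1 := by
        intro B hB
        rw [Finset.card_le_one]
        intro a ha b hb
        by_contra hab
        have hgood := hCgood B (hC'C hB)
        have hd := hgood.2 a (Finset.mem_inter.mp ha).2 b (Finset.mem_inter.mp hb).2 hab
        exact (Set.disjoint_left.mp hd (hyK a (Finset.mem_inter.mp ha).1))
          (hyK b (Finset.mem_inter.mp hb).1)
      have hKle : K.card ≤ C'.card := by
        calc K.card ≤ (C'.biUnion (fun B => K ∩ B)).card := Finset.card_le_card hsub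
          _ ≤ ∑ B ∈ C', (K ∩ B).card := Finset.card_biUnion_le
          _ ≤ ∑ _B ∈ C', 1 := Finset.sum_le_sum hone
          _ = C'.card := by simp
      omega
    have hUlt : U.card < p := by rw [hUcard]; exact hP2
    -- piercing the blocks with at most (p - q) + 1 points
    obtain ⟨PU, hPUcard, hPUp⟩ : ∃ PU : Finset (Fin d → ℝ),
        PU.card ≤ (p - q) + 1 ∧ ∀ i ∈ U, ∃ x ∈ PU, x ∈ F i := by
      by_cases hsmall : U.card ≤ p - q
      · obtain ⟨P₁, h1, h2⟩ := exists_singles F hne U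
        exact ⟨P₁, by omega, h2⟩
      · have hW : p - U.card ≤ (Finset.univ \ U).card := by
          rw [Finset.card_sdiff_of_subset (Finset.subset_univ U), Finset.card_univ]
          omega
        obtain ⟨W, hWsub, hWcard⟩ := Finset.exists_subset_card_eq hW
        have hdisjUW : Disjoint U W := by
          rw [Finset.disjoint_left]
          intro x hxU hxW
          have := hWsub hxW
          simp only [Finset.mem_sdiff] at this
          exact this.2 hxU
        have hJcard : (U ∪ W).card = p := by
          rw [Finset.card_union_of_disjoint hdisjUW, hWcard]
          omega
        obtain ⟨K, hKJ, hKcard, ⟨y, hy⟩⟩ := hprop (U ∪ W) hJcard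
        have hyK : ∀ k ∈ K, y ∈ F k := by
          intro k hk
          simp only [Set.mem_iInter] at hy
          exact hy k hk
        have hcount : (U \ K).card ≤ p - q := by
          have e1 : (K ∩ U).card + (K \ U).card = K.card := Finset.card_inter_add_card_sdiff K U
          have e2 : (U ∩ K).card + (U \ K).card = U.card := Finset.card_inter_add_card_sdiff U K
          have e3 : K \ U ⊆ W := by
            intro x hx
            rcases Finset.mem_union.mp (hKJ (Finset.mem_sdiff.mp hx).1) with h | h
            · exact absurd h (Finset.mem_sdiff.mp hx).2
            · exact h
          have e4 : (K \ U).card ≤ p - U.card := by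
            rw [← hWcard]; exact Finset.card_le_card e3
          have e5 : (U ∩ K).card = (K ∩ U).card := by rw [Finset.inter_comm]
          omega
        obtain ⟨P₁, h1, h2⟩ := exists_singles F hne (U \ K)
        refine ⟨insert y P₁, ?_, ?_⟩
        · calc (insert y P₁).card ≤ P₁.card + 1 := Finset.card_insert_le _ _
            _ ≤ (p - q) + 1 := by omega
        · intro i hi
          by_cases hiK : i ∈ K
          · exact ⟨y, Finset.mem_insert_self _ _, hyK i hiK⟩
          · obtain ⟨x, hx1, hx2⟩ := h2 i (Finset.mem_sdiff.mpr ⟨hi, hiK⟩)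
            exact ⟨x, Finset.mem_insert_of_mem hx1, hx2⟩
    -- real arithmetic bounds
    have hq₀Rpos : (0:ℝ) < (q₀:ℝ) := by exact_mod_cast hq₀pos
    have h2pq₀ : (2:ℝ) ≤ 2 * (p:ℝ) / (q₀:ℝ) := by
      rw [le_div_iff₀ hq₀Rpos]
      linarith [hq₀pR]
    have hfpos : (1:ℝ) ≤ f (2 * (p:ℝ) / (q₀:ℝ)) := hrange _ h2pq₀
    have hfb : f (2 * (p:ℝ) / (q₀:ℝ)) ≤ (q₀:ℝ) / (2 * c) := by
      rw [le_div_iff₀ (by linarith : (0:ℝ) < 2 * c)]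
      linarith [hq₀f]
    have hmR : (m:ℝ) ≤ 2 * (p:ℝ) / (q₀:ℝ) := by
      rw [le_div_iff₀ hq₀Rpos]
      have hmulR : (q₀:ℝ) * (m:ℝ) ≤ 2 * (p:ℝ) := by exact_mod_cast hmul
      linarith
    have hm2R : (2:ℝ) ≤ (m:ℝ) := by exact_mod_cast hm2
    have hfm1 : (1:ℝ) ≤ f (m:ℝ) := hrange _ hm2R
    have hkey : (m:ℝ) * f (m:ℝ) ≤ (p:ℝ) / c := by
      have h1 : f (m:ℝ) ≤ f (2 * (p:ℝ) / (q₀:ℝ)) := hmono _ _ hm2R hmR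
      have hge0 : (0:ℝ) ≤ 2 * (p:ℝ) / (q₀:ℝ) := by linarith
      calc (m:ℝ) * f (m:ℝ)
          ≤ (2 * (p:ℝ) / (q₀:ℝ)) * f (2 * (p:ℝ) / (q₀:ℝ)) :=
            mul_le_mul hmR h1 (by linarith) hge0
        _ ≤ (2 * (p:ℝ) / (q₀:ℝ)) * ((q₀:ℝ) / (2 * c)) :=
            mul_le_mul_of_nonneg_left hfb hge0
        _ = (p:ℝ) / c := by
            field_simp
    have hmpc : (m:ℝ) ≤ (p:ℝ) / c := by
      calc (m:ℝ) = (m:ℝ) * 1 := by ring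
        _ ≤ (m:ℝ) * f (m:ℝ) := by
            apply mul_le_mul_of_nonneg_left hfm1 (by linarith)
        _ ≤ (p:ℝ) / c := hkey
    -- piercing the rest with at most p/c points
    obtain ⟨PR, hPRcard, hPRp⟩ : ∃ PR : Finset (Fin d → ℝ),
        ((PR.card : ℝ) ≤ (p:ℝ) / c) ∧ ∀ i ∈ Finset.univ \ U, ∃ x ∈ PR, x ∈ F i := by
      by_cases hr : m ≤ (Finset.univ \ U).card
      · have hHas : HasPQOn F (Finset.univ \ U) m 2 := by
          refine ⟨hr, ?_⟩
          intro J hJR hJcard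
          have hng : ¬ GoodBlock F m J := hCmax J hJR
          rw [GoodBlock, not_and] at hng
          have hng2 := hng hJcard
          push_neg at hng2
          obtain ⟨a, ha, b, hb, hab, hnd⟩ := hng2
          obtain ⟨x, hx1, hx2⟩ := Set.not_disjoint_iff.mp hnd
          refine ⟨{a, b}, ?_, Finset.card_pair hab, ⟨x, ?_⟩⟩
          · intro z hz
            rcases Finset.mem_insert.mp hz with rfl | hz
            · exact ha
            · rw [Finset.mem_singleton] at hz
              subst hz
              exact hb
          · simp only [Set.mem_iInter, Finset.mem_insert, Finset.mem_singleton]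
            rintro k (rfl | rfl) <;> assumption
        obtain ⟨PR, h1, h2⟩ := hp2 m hm2 (Finset.univ \ U) hHas
        exact ⟨PR, le_trans h1 hkey, h2⟩
      · obtain ⟨PR, h1, h2⟩ := exists_singles F hne (Finset.univ \ U)
        refine ⟨PR, ?_, h2⟩
        have h3 : PR.card + 1 ≤ m := by omega
        have h4 : (PR.card : ℝ) + 1 ≤ (m:ℝ) := by exact_mod_cast h3
        linarith
    -- assemble
    refine ⟨PU ∪ PR, ?_, ?_⟩
    · have hcard_le : (PU ∪ PR).card ≤ PU.card + PR.card := Finset.card_union_le _ _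
      have h1 : ((PU ∪ PR).card : ℝ) ≤ (PU.card : ℝ) + (PR.card : ℝ) := by exact_mod_cast hcard_le
      have h2 : (PU.card : ℝ) ≤ ((p - q : ℕ) : ℝ) + 1 := by exact_mod_cast hPUcard
      have h3 : ((p - q : ℕ) : ℝ) = (p:ℝ) - (q:ℝ) := by
        rw [Nat.cast_sub hqp]
      linarith
    · intro i
      by_cases hiU : i ∈ U
      · obtain ⟨x, h1, h2⟩ := hPUp i hiU
        exact ⟨x, Finset.mem_union_left _ h1, h2⟩
      · obtain ⟨x, h1, h2⟩ := hPRp i (Finset.mem_sdiff.mpr ⟨Finset.mem_univ i, hiU⟩)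
        exact ⟨x, Finset.mem_union_right _ h1, h2⟩
end

section
/- Let F be a finite family of nonempty compact convex sets in ℝ^d such that every pairwise-intersecting subfamily of F has a common point. Let C, C' ∈ F be disjoint, and let H = {x ∈ ℝ^d : ⟨u,x⟩ = α} be a hyperplane strictly separating C from C' (i.e., ⟨u,x⟩ < α for all x ∈ C and ⟨u,x⟩ > α for all x ∈ C', for some u ≠ 0). Let X = {A ∈ F : A ∩ C ≠ ∅ and A ∩ C' ≠ ∅}. Then: (i) for all A, A' ∈ X, A ∩ A' ≠ ∅ if and only if A ∩ A' ∩ H ≠ ∅; and (ii) for every subfamily T ⊆ X whose members pairwise intersect, ⋂_{A∈T} (A ∩ H) ≠ ∅. -/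
lemma cross_lemma {d : ℕ} {S : Set (Fin d → ℝ)} (hS : Convex ℝ S) (u : Fin d → ℝ) (α : ℝ)
    {p q : Fin d → ℝ} (hp : p ∈ S) (hq : q ∈ S)
    (hfp : ∑ j, u j * p j < α) (hfq : α < ∑ j, u j * q j) :
    ∃ x ∈ S, ∑ k, u k * x k = α := by
  set fp := ∑ j, u j * p j with hfpd
  set fq := ∑ j, u j * q j with hfqd
  have hlt : fp < fq := lt_trans hfp hfq
  have hne : fq - fp ≠ 0 := by linarith
  set t : ℝ := (α - fp) / (fq - fp) with ht
  have ht0 : 0 ≤ t := div_nonneg (by linarith) (by linarith)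
  have ht1 : t ≤ 1 := by
    rw [ht, div_le_one (by linarith)]; linarith
  refine ⟨(1 - t) • p + t • q, hS hp hq (by linarith) ht0 (by ring), ?_⟩
  have hx : ∀ k, ((1 - t) • p + t • q) k = (1 - t) * p k + t * q k := fun k => rfl
  have : ∑ k, u k * ((1 - t) * p k + t * q k) = (1 - t) * fp + t * fq := by
    rw [hfpd, hfqd, Finset.mul_sum, Finset.mul_sum, ← Finset.sum_add_distrib]
    exact Finset.sum_congr rfl (fun k _ => by ring)
  simp only [hx, this]
  have : t * (fq - fp) = α - fp := by
    rw [ht, div_mul_cancel₀ _ hne]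
  linarith

/-- Claim 3.1: let `F` be a finite family of nonempty compact convex sets in
`ℝ^d` such that every pairwise-intersecting subfamily has a common point. Let
`C = F i₀` and `C' = F i₁` be disjoint members, and let
`H = {x : ⟨u,x⟩ = α}` be a hyperplane strictly separating them. Let `X` be the
set of (indices of) members meeting both `C` and `C'`. Then two members indexed
in `X` intersect iff they intersect on `H`, and every pairwise-intersecting
subfamily of `X` has a common point on `H`. -/
theorem separating_hyperplane_claim (d : ℕ) {ι : Type} [Fintype ι]
    (F : ι → Set (Fin d → ℝ))
    (hne : ∀ i, (F i).Nonempty)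
    (hcpt : ∀ i, IsCompact (F i))
    (hconv : ∀ i, Convex ℝ (F i))
    (helly : ∀ S : Finset ι,
      (∀ i ∈ S, ∀ j ∈ S, (F i ∩ F j).Nonempty) → (⋂ i ∈ S, F i).Nonempty)
    (i₀ i₁ : ι) (hdisj : F i₀ ∩ F i₁ = ∅)
    (u : Fin d → ℝ) (hu : u ≠ 0) (α : ℝ)
    (hsep₀ : ∀ x ∈ F i₀, ∑ j, u j * x j < α)
    (hsep₁ : ∀ x ∈ F i₁, α < ∑ j, u j * x j)
    (X : Set ι)
    (hX : X = {i | (F i ∩ F i₀).Nonempty ∧ (F i ∩ F i₁).Nonempty}) :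
    (∀ i ∈ X, ∀ j ∈ X,
      ((F i ∩ F j).Nonempty ↔
        (F i ∩ F j ∩ {x | ∑ k, u k * x k = α}).Nonempty)) ∧
    (∀ T : Finset ι, ↑T ⊆ X →
      (∀ i ∈ T, ∀ j ∈ T, (F i ∩ F j).Nonempty) →
      (⋂ i ∈ T, F i ∩ {x | ∑ k, u k * x k = α}).Nonempty) := by
  classical
  have part2 : ∀ T : Finset ι, ↑T ⊆ X →
      (∀ i ∈ T, ∀ j ∈ T, (F i ∩ F j).Nonempty) →
      (⋂ i ∈ T, F i ∩ {x | ∑ k, u k * x k = α}).Nonempty := by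
    intro T hTX hpair
    -- point p in ⋂ T ∩ F i₀
    have hX' : ∀ i ∈ T, (F i ∩ F i₀).Nonempty ∧ (F i ∩ F i₁).Nonempty := by
      intro i hi
      have := hTX hi
      rw [hX] at this
      exact this
    have h0 : (⋂ i ∈ insert i₀ T, F i).Nonempty := by
      apply helly
      intro i hi j hj
      simp only [Finset.mem_insert] at hi hj
      rcases hi with rfl | hi <;> rcases hj with rfl | hj
      · rw [Set.inter_self]; exact hne _
      · obtain ⟨x, hx1, hx2⟩ := (hX' j hj).1
        exact ⟨x, hx2, hx1⟩
      · exact (hX' i hi).1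
      · exact hpair i hi j hj
    have h1 : (⋂ i ∈ insert i₁ T, F i).Nonempty := by
      apply helly
      intro i hi j hj
      simp only [Finset.mem_insert] at hi hj
      rcases hi with rfl | hi <;> rcases hj with rfl | hj
      · rw [Set.inter_self]; exact hne _
      · obtain ⟨x, hx1, hx2⟩ := (hX' j hj).2
        exact ⟨x, hx2, hx1⟩
      · exact (hX' i hi).2
      · exact hpair i hi j hj
    obtain ⟨p, hp⟩ := h0
    obtain ⟨q, hq⟩ := h1
    simp only [Set.mem_iInter, Finset.mem_insert] at hp hq
    have hpT : p ∈ ⋂ i ∈ T, F i := by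
      simp only [Set.mem_iInter]; exact fun i hi => hp i (Or.inr hi)
    have hqT : q ∈ ⋂ i ∈ T, F i := by
      simp only [Set.mem_iInter]; exact fun i hi => hq i (Or.inr hi)
    have hconvT : Convex ℝ (⋂ i ∈ T, F i) :=
      convex_iInter fun i => convex_iInter fun _ => hconv i
    have hfp : ∑ j, u j * p j < α := hsep₀ p (hp i₀ (Or.inl rfl))
    have hfq : α < ∑ j, u j * q j := hsep₁ q (hq i₁ (Or.inl rfl))
    obtain ⟨x, hxT, hxα⟩ := cross_lemma hconvT u α hpT hqT hfp hfq
    refine ⟨x, ?_⟩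
    simp only [Set.mem_iInter, Set.mem_inter_iff] at hxT ⊢
    exact fun i hi => ⟨hxT i hi, hxα⟩
  refine ⟨?_, part2⟩
  intro i hi j hj
  constructor
  · intro hij
    have := part2 {i, j} (by
        intro k hk
        simp only [Finset.coe_insert, Finset.coe_singleton, Set.mem_insert_iff,
          Set.mem_singleton_iff] at hk
        rcases hk with rfl | rfl <;> assumption)
      (by
        intro a ha b hb
        simp only [Finset.mem_insert, Finset.mem_singleton] at ha hb
        rcases ha with rfl | rfl <;> rcases hb with rfl | rfl
        · rw [Set.inter_self]; exact hne _
        · exact hij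
        · obtain ⟨x, hx1, hx2⟩ := hij; exact ⟨x, hx2, hx1⟩
        · rw [Set.inter_self]; exact hne _)
    obtain ⟨x, hx⟩ := this
    simp only [Set.mem_iInter, Finset.mem_insert, Finset.mem_singleton,
      Set.mem_inter_iff] at hx
    obtain ⟨hxi, hxα⟩ := hx i (Or.inl rfl)
    obtain ⟨hxj, _⟩ := hx j (Or.inr rfl)
    exact ⟨x, ⟨hxi, hxj⟩, hxα⟩
  · rintro ⟨x, ⟨hx1, _⟩⟩
    exact ⟨x, hx1⟩
end

section
/- For every integer m ≥ 1 there exist an integer n ≥ 1 and a finite indexed family F of nonempty axis-parallel boxes in ℝ^n such that F satisfies the (3,2)-property (among any three members of F some two intersect) but F cannot be pierced by fewer than m points. -/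
/-- An axis-parallel box in `ℝ^n`: a nonempty product of closed bounded
intervals, i.e. `Set.Icc a b` in `Fin n → ℝ` with `a ≤ b`. -/
def IsBox {n : ℕ} (A : Set (Fin n → ℝ)) : Prop :=
  ∃ a b : Fin n → ℝ, a ≤ b ∧ A = Set.Icc a b

namespace No32

/-- Vertices of the shift graph: strictly increasing pairs. -/
abbrev V (t : ℕ) := {p : Fin t × Fin t // p.1 < p.2}

noncomputable def lo (t : ℕ) (v : V t) : Fin t → ℝ := fun j => if j = v.1.2 then 2 else 0

noncomputable def hi (t : ℕ) (v : V t) : Fin t → ℝ := fun j => if j = v.1.1 then 1 else 3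

noncomputable def box (t : ℕ) (v : V t) : Set (Fin t → ℝ) := Set.Icc (lo t v) (hi t v)

lemma lo_le_hi (t : ℕ) (v : V t) : lo t v ≤ hi t v := by
  intro j
  have h := v.2
  simp only [lo, hi]
  split_ifs with h1 h2 h2 <;> norm_num
  exact (ne_of_lt h).symm (h1.symm.trans h2)

lemma mem_box_iff (t : ℕ) (v : V t) (x : Fin t → ℝ) :
    x ∈ box t v ↔ ∀ j, ((if j = v.1.2 then (2:ℝ) else 0) ≤ x j ∧
      x j ≤ (if j = v.1.1 then (1:ℝ) else 3)) := by
  simp [box, Set.mem_Icc, Pi.le_def, lo, hi, forall_and]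

/-- If `u = (a,b)` and `v = (b,c)` then the boxes are disjoint. -/
lemma box_disjoint (t : ℕ) (u v : V t) (h : u.1.2 = v.1.1) (x : Fin t → ℝ)
    (hu : x ∈ box t u) (hv : x ∈ box t v) : False := by
  rw [mem_box_iff] at hu hv
  have h1 := (hu u.1.2).1
  have h2 := (hv u.1.2).2
  rw [if_pos rfl] at h1
  rw [if_pos h] at h2
  linarith

/-- If `u` and `v` are not adjacent in the shift graph, the boxes intersect. -/
lemma box_inter (t : ℕ) (u v : V t) (h1 : u.1.2 ≠ v.1.1) (h2 : v.1.2 ≠ u.1.1) :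
    (box t u ∩ box t v).Nonempty := by
  have hu : u.1.1 ≠ u.1.2 := ne_of_lt u.2
  have hv : v.1.1 ≠ v.1.2 := ne_of_lt v.2
  refine ⟨fun j => if j = u.1.2 ∨ j = v.1.2 then 2 else 1/2, ?_, ?_⟩
  · rw [mem_box_iff]
    intro j
    by_cases g1 : j = u.1.2 ∨ j = v.1.2
    · rw [if_pos g1]
      have gne : j ≠ u.1.1 := by
        intro g2
        rcases g1 with g | g
        · exact hu (g2.symm.trans g)
        · exact h2 (g.symm.trans g2)
      refine ⟨by split_ifs <;> norm_num, by rw [if_neg gne]; norm_num⟩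
    · rw [if_neg g1]
      push_neg at g1
      refine ⟨by rw [if_neg g1.1]; norm_num, by split_ifs <;> norm_num⟩
  · rw [mem_box_iff]
    intro j
    by_cases g1 : j = u.1.2 ∨ j = v.1.2
    · rw [if_pos g1]
      have gne : j ≠ v.1.1 := by
        intro g2
        rcases g1 with g | g
        · exact h1 (g.symm.trans g2)
        · exact hv (g2.symm.trans g)
      refine ⟨by split_ifs <;> norm_num, by rw [if_neg gne]; norm_num⟩
    · rw [if_neg g1]
      push_neg at g1
      refine ⟨by rw [if_neg g1.2]; norm_num, by split_ifs <;> norm_num⟩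

end No32

/-- Appendix B.1 (Fon der Flaass–Kostochka example): for every `m ≥ 1` there is
a dimension `n ≥ 1` and a finite family of nonempty axis-parallel boxes in
`ℝ^n` satisfying the `(3,2)`-property which cannot be pierced by fewer than
`m` points. -/
theorem no_32_theorem_for_boxes (m : ℕ) (hm : 1 ≤ m) :
    ∃ (n N : ℕ), 1 ≤ n ∧
      ∃ F : Fin N → Set (Fin n → ℝ),
        (∀ i, IsBox (F i)) ∧
        HasPQ F 3 2 ∧
        ∀ P : Finset (Fin n → ℝ), Pierces F P → m ≤ P.card := by
  classical
  set t := 2 ^ m + 1 with htdef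
  have hpow : 2 ≤ 2 ^ m := by
    calc 2 = 2 ^ 1 := rfl
    _ ≤ 2 ^ m := Nat.pow_le_pow_right (by norm_num) hm
  have ht3 : 3 ≤ t := by omega
  refine ⟨t, Fintype.card (No32.V t), by omega, ?_⟩
  set N := Fintype.card (No32.V t) with hNdef
  let e : Fin N ≃ No32.V t := (Fintype.equivFin (No32.V t)).symm
  refine ⟨fun i => No32.box t (e i), fun i => ⟨_, _, No32.lo_le_hi t (e i), rfl⟩, ⟨?_, ?_⟩, ?_⟩
  · -- 3 ≤ card
    rw [Fintype.card_fin]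
    have h01 : (⟨0, by omega⟩ : Fin t) < (⟨1, by omega⟩ : Fin t) := by
      simp [Fin.lt_def]
    have h02 : (⟨0, by omega⟩ : Fin t) < (⟨2, by omega⟩ : Fin t) := by
      simp [Fin.lt_def]
    have h12 : (⟨1, by omega⟩ : Fin t) < (⟨2, by omega⟩ : Fin t) := by
      simp [Fin.lt_def]
    have : 2 < Fintype.card (No32.V t) := by
      rw [Fintype.two_lt_card_iff]
      refine ⟨⟨(⟨0, by omega⟩, ⟨1, by omega⟩), h01⟩,
        ⟨(⟨0, by omega⟩, ⟨2, by omega⟩), h02⟩,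
        ⟨(⟨1, by omega⟩, ⟨2, by omega⟩), h12⟩, ?_, ?_, ?_⟩ <;>
        simp [Subtype.ext_iff, Prod.ext_iff, Fin.ext_iff]
    omega
  · -- (3,2) property, second part
    intro J hJ
    obtain ⟨x, y, z, hxy, hxz, hyz, rfl⟩ := Finset.card_eq_three.mp hJ
    -- among the three, two are non-adjacent
    have tri : ((e x).1.2 ≠ (e y).1.1 ∧ (e y).1.2 ≠ (e x).1.1) ∨
        ((e x).1.2 ≠ (e z).1.1 ∧ (e z).1.2 ≠ (e x).1.1) ∨
        ((e y).1.2 ≠ (e z).1.1 ∧ (e z).1.2 ≠ (e y).1.1) := by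
      by_contra hcon
      push_neg at hcon
      have hx := (e x).2
      have hy := (e y).2
      have hz := (e z).2
      rw [Fin.lt_def] at hx hy hz
      obtain ⟨h1, h2, h3⟩ := hcon
      have A1 : (e x).1.2 = (e y).1.1 ∨ (e y).1.2 = (e x).1.1 := by
        by_cases c : (e x).1.2 = (e y).1.1
        · exact Or.inl c
        · exact Or.inr (h1 c)
      have A2 : (e x).1.2 = (e z).1.1 ∨ (e z).1.2 = (e x).1.1 := by
        by_cases c : (e x).1.2 = (e z).1.1
        · exact Or.inl c
        · exact Or.inr (h2 c)
      have A3 : (e y).1.2 = (e z).1.1 ∨ (e z).1.2 = (e y).1.1 := by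
        by_cases c : (e y).1.2 = (e z).1.1
        · exact Or.inl c
        · exact Or.inr (h3 c)
      rcases A1 with a1 | a1 <;> rcases A2 with a2 | a2 <;> rcases A3 with a3 | a3 <;>
        · have b1 := congrArg Fin.val a1
          have b2 := congrArg Fin.val a2
          have b3 := congrArg Fin.val a3
          omega
    rcases tri with ⟨h1, h2⟩ | ⟨h1, h2⟩ | ⟨h1, h2⟩
    · refine ⟨{x, y}, ?_, ?_, ?_⟩
      · intro a ha; simp at ha; rcases ha with h | h <;> simp [h]
      · rw [Finset.card_insert_of_notMem (by simp [hxy]), Finset.card_singleton]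
      · rw [Finset.set_biInter_insert, Finset.set_biInter_singleton]
        exact No32.box_inter t (e x) (e y) h1 h2
    · refine ⟨{x, z}, ?_, ?_, ?_⟩
      · intro a ha; simp at ha; rcases ha with h | h <;> simp [h]
      · rw [Finset.card_insert_of_notMem (by simp [hxz]), Finset.card_singleton]
      · rw [Finset.set_biInter_insert, Finset.set_biInter_singleton]
        exact No32.box_inter t (e x) (e z) h1 h2
    · refine ⟨{y, z}, ?_, ?_, ?_⟩
      · intro a ha; simp at ha; rcases ha with h | h <;> simp [h]
      · rw [Finset.card_insert_of_notMem (by simp [hyz]), Finset.card_singleton]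
      · rw [Finset.set_biInter_insert, Finset.set_biInter_singleton]
        exact No32.box_inter t (e y) (e z) h1 h2
  · -- piercing number
    intro P hP
    by_contra hlt
    push_neg at hlt
    choose c hc1 hc2 using hP
    let S : Fin t → Finset (Fin t → ℝ) := fun a =>
      (Finset.univ.filter (fun v : No32.V t => v.1.1 = a)).image (fun v => c (e.symm v))
    have hSP : ∀ a, S a ∈ P.powerset := by
      intro a
      rw [Finset.mem_powerset]
      intro x hx
      simp only [S, Finset.mem_image] at hx
      obtain ⟨v, _, rfl⟩ := hx
      exact hc1 _
    have key : ∀ a a' : Fin t, a < a' → S a ≠ S a' := by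
      intro a a' haa hEq
      set v : No32.V t := ⟨(a, a'), haa⟩ with hv
      have hmem : c (e.symm v) ∈ S a := by
        simp only [S, Finset.mem_image]
        exact ⟨v, by simp [hv], rfl⟩
      rw [hEq] at hmem
      simp only [S, Finset.mem_image, Finset.mem_filter] at hmem
      obtain ⟨w, ⟨_, hw1⟩, hw2⟩ := hmem
      have hxv : c (e.symm v) ∈ No32.box t v := by
        have := hc2 (e.symm v)
        simpa using this
      have hxw : c (e.symm v) ∈ No32.box t w := by
        have := hc2 (e.symm w)
        rw [hw2] at this
        simpa using this
      exact No32.box_disjoint t v w (by simp [hv, hw1]) _ hxv hxw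
    have hcardlt : Fintype.card {s // s ∈ P.powerset} < Fintype.card (Fin t) := by
      rw [Fintype.card_fin, Fintype.card_coe, Finset.card_powerset]
      have : 2 ^ P.card ≤ 2 ^ m := Nat.pow_le_pow_right (by norm_num) (le_of_lt hlt)
      omega
    obtain ⟨a, a', hne, hSS⟩ :=
      Fintype.exists_ne_map_eq_of_card_lt
        (fun a : Fin t => (⟨S a, hSP a⟩ : {s // s ∈ P.powerset})) hcardlt
    have hSS' : S a = S a' := congrArg Subtype.val hSS
    rcases hne.lt_or_gt with h | h
    · exact key a a' h hSS'
    · exact key a' a h hSS'.symm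
end

section
/- For all integers d ≥ 1, p ≥ q ≥ 2 and n ≥ p, there exists a finite indexed family of n nonempty compact convex sets in ℝ^d (consisting of p − q pairwise-disjoint sets together with n − (p − q) copies of one further set disjoint from them) that satisfies the (p,q)-property but cannot be pierced by fewer than p − q + 1 points. -/
/-- Remark 1.2 (tightness of the Hadwiger–Debrunner bound): for all `d ≥ 1`,
`p ≥ q ≥ 2` and `n ≥ p`, there is a family of `n` nonempty compact convex sets
in `ℝ^d` — `p - q` pairwise-disjoint sets together with `n - (p - q)` copies of
one further set disjoint from them — that satisfies the `(p,q)`-property but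
cannot be pierced by fewer than `p - q + 1` points. -/
theorem hd_bound_tight (d p q n : ℕ) (hd : 1 ≤ d) (hq2 : 2 ≤ q) (hqp : q ≤ p)
    (hn : p ≤ n) :
    ∃ F : Fin n → Set (Fin d → ℝ),
      (∀ i, (F i).Nonempty) ∧
      (∀ i, IsCompact (F i)) ∧
      (∀ i, Convex ℝ (F i)) ∧
      (∃ (J : Finset (Fin n)) (B : Set (Fin d → ℝ)),
        J.card = p - q ∧
        (∀ i ∈ J, ∀ j ∈ J, i ≠ j → Disjoint (F i) (F j)) ∧
        (∀ i ∈ J, Disjoint (F i) B) ∧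
        (∀ i ∉ J, F i = B)) ∧
      HasPQ F p q ∧
      ∀ P : Finset (Fin d → ℝ), Pierces F P → p - q + 1 ≤ P.card := by
  set e : ℕ → (Fin d → ℝ) := fun k _ => (k : ℝ) with he
  have einj : Function.Injective e := by
    intro a b hab
    have h2 : (a : ℝ) = (b : ℝ) := congrFun hab ⟨0, hd⟩
    exact_mod_cast h2
  refine ⟨fun i => {e (if (i : ℕ) < p - q then (i : ℕ) + 1 else 0)}, ?_, ?_, ?_, ?_, ?_, ?_⟩
  · intro i; exact ⟨_, rfl⟩
  · intro i; exact isCompact_singleton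
  · intro i; exact convex_singleton _
  · refine ⟨Finset.univ.filter (fun i : Fin n => (i : ℕ) < p - q), {e 0}, ?_, ?_, ?_, ?_⟩
    · have himg : (Finset.univ.filter (fun i : Fin n => (i : ℕ) < p - q)).image Fin.val
          = Finset.range (p - q) := by
        ext m
        simp only [Finset.mem_image, Finset.mem_filter, Finset.mem_univ, true_and,
          Finset.mem_range]
        constructor
        · rintro ⟨j, hj, rfl⟩; exact hj
        · intro hm; exact ⟨⟨m, by omega⟩, hm, rfl⟩
      have := congrArg Finset.card himg
      rwa [Finset.card_image_of_injective _ Fin.val_injective, Finset.card_range] at this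
    · intro i hi j hj hij
      simp only [Finset.mem_filter, Finset.mem_univ, true_and] at hi hj
      simp only [if_pos hi, if_pos hj, Set.disjoint_singleton]
      intro h
      exact hij (Fin.ext (by simpa using einj h))
    · intro i hi
      simp only [Finset.mem_filter, Finset.mem_univ, true_and] at hi
      simp only [if_pos hi, Set.disjoint_singleton]
      intro h
      have := einj h
      omega
    · intro i hi
      simp only [Finset.mem_filter, Finset.mem_univ, true_and, not_lt] at hi
      show ({e (if (i : ℕ) < p - q then (i : ℕ) + 1 else 0)} : Set (Fin d → ℝ)) = {e 0}
      rw [if_neg (by omega)]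
  · constructor
    · simpa using hn
    · intro J hJ
      have hsub : J.filter (fun i : Fin n => ¬ ((i : ℕ) < p - q)) ⊆ J :=
        Finset.filter_subset _ _
      have hcard : q ≤ (J.filter (fun i : Fin n => ¬ ((i : ℕ) < p - q))).card := by
        have h1 : (J.filter (fun i : Fin n => (i : ℕ) < p - q)).card ≤ p - q := by
          have hsub2 : (J.filter (fun i : Fin n => (i : ℕ) < p - q)).image Fin.val
              ⊆ Finset.range (p - q) := by
            intro m hm
            simp only [Finset.mem_image, Finset.mem_filter] at hm
            obtain ⟨j, ⟨_, hj⟩, rfl⟩ := hm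
            simpa using hj
          have := Finset.card_le_card hsub2
          rwa [Finset.card_image_of_injective _ Fin.val_injective, Finset.card_range] at this
        have h2 := Finset.card_filter_add_card_filter_not
          (s := J) (p := fun i : Fin n => (i : ℕ) < p - q)
        omega
      obtain ⟨K, hKsub, hKcard⟩ := Finset.exists_subset_card_eq hcard
      refine ⟨K, hKsub.trans hsub, hKcard, e 0, ?_⟩
      simp only [Set.mem_iInter]
      intro k hk
      have hk2 := (Finset.mem_filter.mp (hKsub hk)).2
      simp [if_neg hk2]
  · intro P hP
    have hcont : ∀ k ∈ Finset.range (p - q + 1), e k ∈ P := by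
      intro k hk
      simp only [Finset.mem_range] at hk
      rcases Nat.eq_zero_or_pos k with h0 | h0
      · subst h0
        have hlt : p - q < n := by omega
        obtain ⟨x, hx, hx2⟩ := hP ⟨p - q, hlt⟩
        simp only [Set.mem_singleton_iff] at hx2
        rw [if_neg (by simp)] at hx2
        rwa [hx2] at hx
      · have hlt : k - 1 < n := by omega
        obtain ⟨x, hx, hx2⟩ := hP ⟨k - 1, hlt⟩
        simp only [Set.mem_singleton_iff, Fin.val_mk] at hx2
        rw [if_pos (by omega)] at hx2
        rw [hx2] at hx
        simpa [show k - 1 + 1 = k by omega] using hx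
    calc p - q + 1 = ((Finset.range (p - q + 1)).image e).card := by
          rw [Finset.card_image_of_injective _ einj, Finset.card_range]
      _ ≤ P.card := Finset.card_le_card (by
          intro x hx
          simp only [Finset.mem_image] at hx
          obtain ⟨k, hk, rfl⟩ := hx
          exact hcont k hk)
end
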